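/- arXiv:2502.20322 — 9 statements merged into one kernel-verified Lean document; each statement's English description precedes it below -/
import Mathlib

section
/- Let q be a squarefree positive integer. For a ∈ Z/qZ define D(a) = { b ∈ Z/qZ : b^(p) ≤ a^(p) for all primes p dividing q }, where x^(p) ∈ {0, 1, ..., p−1} denotes the residue of x mod p. Then the sumset of two downsets in Z/qZ is again a downset, where A ⊆ Z/qZ is a downset if a ∈ A implies D(a) ⊆ A. -/
/-!
Writing `xₚ` for the residue of `x` mod a prime `p ∣ q`, the point is that
`D(a + b) ⊆ D(a) + D(b)`. Given `d ∈ D(a + b)`, choose by the Chinese remainder theorem `x` with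
`xₚ = min dₚ aₚ` for every `p`. Then `x ∈ D(a)`, and since `xₚ ≤ dₚ` no borrow occurs, so
`(d - x)ₚ = dₚ - min dₚ aₚ ≤ bₚ` because `dₚ ≤ (a + b)ₚ ≤ aₚ + bₚ`.
-/

open Pointwise

/-- The "box" below `a` in `ZMod q`: all `b` whose residue mod every prime `p ∣ q`
is at most that of `a`. -/
def downBox (q : ℕ) (a : ZMod q) : Set (ZMod q) :=
  {b | ∀ p : ℕ, p.Prime → p ∣ q → b.val % p ≤ a.val % p}

/-- A downset in `ZMod q`. -/
def IsDownset (q : ℕ) (A : Set (ZMod q)) : Prop :=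
  ∀ a ∈ A, downBox q a ⊆ A

namespace ZMod

variable {n p : ℕ} [NeZero n]

lemma val_castHom_of_dvd (h : p ∣ n) (a : ZMod n) :
    (castHom h (ZMod p) a).val = a.val % p := by
  rw [castHom_apply, cast_eq_val, val_natCast]

lemma val_add_mod_le (h : p ∣ n) (a b : ZMod n) :
    (a + b).val % p ≤ a.val % p + b.val % p := by
  simpa only [← map_add, val_castHom_of_dvd h] using
    val_add_le (castHom h (ZMod p) a) (castHom h _ b)

lemma val_sub_mod_of_le (h : p ∣ n) (hp : p ≠ 0) {a b : ZMod n}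
    (hba : b.val % p ≤ a.val % p) : (a - b).val % p = a.val % p - b.val % p := by
  have : NeZero p := ⟨hp⟩
  simpa only [← map_sub, val_castHom_of_dvd h] using
    val_sub (a := castHom h (ZMod p) a) (b := castHom h _ b)
      (by simpa only [val_castHom_of_dvd h])

lemma exists_val_mod_prime_eq (f : ℕ → ℕ) :
    ∃ x : ZMod n, ∀ p : ℕ, p.Prime → p ∣ n → x.val % p = f p % p := by
  have hcop : Set.Pairwise (n.primeFactors : Set ℕ) (Function.onFun Nat.Coprime id) :=
    fun p hp r hr hne => (Nat.coprime_primes (Nat.prime_of_mem_primeFactors hp)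
      (Nat.prime_of_mem_primeFactors hr)).mpr hne
  obtain ⟨k, hk⟩ := Nat.chineseRemainderOfFinset f id n.primeFactors
    (fun p hp => (Nat.prime_of_mem_primeFactors hp).ne_zero) hcop
  refine ⟨k, fun p hp hpn => ?_⟩
  rw [val_natCast, Nat.mod_mod_of_dvd k hpn]
  exact hk p (Nat.mem_primeFactors.mpr ⟨hp, hpn, NeZero.ne n⟩)

end ZMod

theorem downBox_add_subset {q : ℕ} [NeZero q] (a b : ZMod q) :
    downBox q (a + b) ⊆ downBox q a + downBox q b := by
  intro d hd
  obtain ⟨x, hx⟩ := ZMod.exists_val_mod_prime_eq (n := q) fun p => min (d.val % p) (a.val % p)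
  have hxp : ∀ p, p.Prime → p ∣ q → x.val % p = min (d.val % p) (a.val % p) := fun p hp hpq => by
    rw [hx p hp hpq, Nat.mod_eq_of_lt ((min_le_right _ _).trans_lt (Nat.mod_lt _ hp.pos))]
  refine ⟨x, fun p hp hpq => ?_, d - x, fun p hp hpq => ?_, add_sub_cancel _ _⟩
  · rw [hxp p hp hpq]
    exact min_le_right _ _
  · have hdab := (hd p hp hpq).trans (ZMod.val_add_mod_le hpq a b)
    have hxd : x.val % p ≤ d.val % p := by
      rw [hxp p hp hpq]
      exact min_le_left _ _
    rw [ZMod.val_sub_mod_of_le hpq hp.ne_zero hxd, hxp p hp hpq]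
    omega

theorem sumset_of_downsets_is_downset_general (q : ℕ) (hq : 0 < q)
    (A B : Set (ZMod q)) (hA : IsDownset q A) (hB : IsDownset q B) :
    IsDownset q (A + B) := by
  have : NeZero q := ⟨hq.ne'⟩
  rintro _ ⟨a, ha, b, hb, rfl⟩ d hd
  obtain ⟨x, hx, y, hy, rfl⟩ := downBox_add_subset a b hd
  exact Set.add_mem_add (hA a ha hx) (hB b hb hy)

theorem sumset_of_downsets_is_downset (q : ℕ) (hq : 0 < q) (hsf : Squarefree q)
    (A B : Set (ZMod q)) (hA : IsDownset q A) (hB : IsDownset q B) :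
    IsDownset q (A + B) :=
  sumset_of_downsets_is_downset_general q hq A B hA hB
end

section
/- Let q be a squarefree integer all of whose prime factors are at least 5, and let u ∈ Z/qZ satisfy u^(p) = (p−1)/2 for every prime p dividing q, where x^(p) denotes the residue of x mod p in {0,...,p−1}. Then the 4-fold sumset D(u−1) + D(u−1) + D(u−1) + D(u−1) equals Z/qZ, where D(a) = { b ∈ Z/qZ : b^(p) ≤ a^(p) for all p | q }. -/
open Pointwise

/-!
Write `D(a)` as the box `{b | b mod p ≤ k p for all p ∣ q}` with bound `k p = a mod p`.
Sumsets of such boxes are again boxes, with the bounds added: one inclusion is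
`(b + c) mod p ≤ b mod p + c mod p`, the other peels off a summand with residues
`min (x mod p) (k p)` by the Chinese remainder theorem. Here `u - 1` has residue
`(p - 3) / 2` mod `p`, and `4 · ((p - 3) / 2) ≥ p - 1` for every odd `p ≥ 5`, so the
fourfold sum is the box with bounds `≥ p - 1`, which is everything.
-/

namespace ZMod

theorem val_mod_eq_val_cast {q : ℕ} [NeZero q] (p : ℕ) (a : ZMod q) :
    a.val % p = (cast a : ZMod p).val := by
  rw [cast_eq_val, val_natCast]

theorem exists_val_mod_eq {q : ℕ} [NeZero q] (c : ℕ → ℕ)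
    (hc : ∀ p : ℕ, p.Prime → p ∣ q → c p < p) :
    ∃ b : ZMod q, ∀ p : ℕ, p.Prime → p ∣ q → b.val % p = c p := by
  have hprime : ∀ p ∈ q.primeFactors, p.Prime := fun p hp => Nat.prime_of_mem_primeFactors hp
  obtain ⟨n, hn⟩ := Nat.chineseRemainderOfFinset c id q.primeFactors
    (fun p hp => (hprime p hp).ne_zero)
    (fun p hp p' hp' hne => (Nat.coprime_primes (hprime p hp) (hprime p' hp')).mpr hne)
  refine ⟨n, fun p hp hpq => ?_⟩
  rw [val_natCast, Nat.mod_mod_of_dvd _ hpq]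
  exact Eq.trans (hn p (Nat.mem_primeFactors.mpr ⟨hp, hpq, NeZero.ne q⟩))
    (Nat.mod_eq_of_lt (hc p hp hpq))

theorem val_sub_one_mod {q p : ℕ} [NeZero q] (hpq : p ∣ q) {u : ZMod q}
    (hu : 1 ≤ u.val % p) : (u - 1).val % p = u.val % p - 1 := by
  have hp0 : 0 < p := Nat.pos_of_dvd_of_pos hpq (NeZero.pos q)
  have hp1 : p ≠ 1 := by rintro rfl; simp [Nat.mod_one] at hu
  have : Fact (1 < p) := ⟨by omega⟩
  rw [val_mod_eq_val_cast] at hu ⊢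
  rw [val_mod_eq_val_cast, cast_sub hpq, cast_one hpq, val_sub (by rwa [val_one]), val_one]

end ZMod

open ZMod

def residueBox (q : ℕ) (k : ℕ → ℕ) : Set (ZMod q) :=
  {b | ∀ p : ℕ, p.Prime → p ∣ q → b.val % p ≤ k p}

theorem downBox_eq_residueBox (q : ℕ) (a : ZMod q) :
    downBox q a = residueBox q (fun p => a.val % p) := rfl

theorem residueBox_add_residueBox {q : ℕ} [NeZero q] (k l : ℕ → ℕ) :
    residueBox q k + residueBox q l = residueBox q (k + l) := by
  ext x
  constructor
  · rintro ⟨b, hb, c, hc, rfl⟩ p hp hpq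
    calc (b + c).val % p ≤ (cast b : ZMod p).val + (cast c : ZMod p).val := by
          rw [val_mod_eq_val_cast, cast_add hpq]; exact val_add_le _ _
      _ ≤ k p + l p := by
          rw [← val_mod_eq_val_cast p b, ← val_mod_eq_val_cast p c]
          exact add_le_add (hb p hp hpq) (hc p hp hpq)
  · intro hx
    obtain ⟨b, hb⟩ := exists_val_mod_eq (q := q) (fun p => min (x.val % p) (k p))
      (fun p hp _ => (min_le_left _ _).trans_lt (Nat.mod_lt _ hp.pos))
    refine ⟨b, fun p hp hpq => (hb p hp hpq).trans_le (min_le_right _ _), x - b,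
      fun p hp hpq => ?_, add_sub_cancel _ _⟩
    have : NeZero p := ⟨hp.ne_zero⟩
    have hbx : (cast b : ZMod p).val ≤ (cast x : ZMod p).val := by
      rw [← val_mod_eq_val_cast p b, ← val_mod_eq_val_cast p x, hb p hp hpq]
      exact min_le_left _ _
    have hxp := hx p hp hpq
    rw [val_mod_eq_val_cast, cast_sub hpq, val_sub hbx, ← val_mod_eq_val_cast p x,
      ← val_mod_eq_val_cast p b, hb p hp hpq]
    simp only [Pi.add_apply] at hxp
    omega

theorem residueBox_eq_univ {q : ℕ} {k : ℕ → ℕ} (hk : ∀ p : ℕ, p.Prime → p ∣ q → p - 1 ≤ k p) :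
    residueBox q k = Set.univ :=
  Set.eq_univ_of_forall fun _ p hp hpq =>
    (Nat.le_sub_one_of_lt (Nat.mod_lt _ hp.pos)).trans (hk p hp hpq)

theorem four_fold_sumset_of_middle_box_general (q : ℕ)
    (h5 : ∀ p : ℕ, p.Prime → p ∣ q → 5 ≤ p)
    (u : ZMod q) (hu : ∀ p : ℕ, p.Prime → p ∣ q → u.val % p = (p - 1) / 2) :
    downBox q (u - 1) + downBox q (u - 1) + downBox q (u - 1) + downBox q (u - 1)
      = Set.univ := by
  have : NeZero q := ⟨by rintro rfl; exact absurd (h5 2 Nat.prime_two (dvd_zero 2)) (by norm_num)⟩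
  simp only [downBox_eq_residueBox, residueBox_add_residueBox]
  refine residueBox_eq_univ fun p hp hpq => ?_
  have hp5 := h5 p hp hpq
  obtain ⟨t, rfl⟩ := hp.odd_of_ne_two (by omega)
  simp only [Pi.add_apply, val_sub_one_mod hpq (by rw [hu _ hp hpq]; omega), hu _ hp hpq]
  omega

theorem four_fold_sumset_of_middle_box (q : ℕ) (hsf : Squarefree q)
    (h5 : ∀ p : ℕ, p.Prime → p ∣ q → 5 ≤ p)
    (u : ZMod q) (hu : ∀ p : ℕ, p.Prime → p ∣ q → u.val % p = (p - 1) / 2) :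
    downBox q (u - 1) + downBox q (u - 1) + downBox q (u - 1) + downBox q (u - 1)
      = Set.univ :=
  four_fold_sumset_of_middle_box_general q h5 u hu
end

section
/- Let w ≥ 4 and W = 8 * ∏_{2 < p < w, p prime} p. Let Z(W) be the set of reduced quadratic residues modulo W, i.e., Z(W) = { b ∈ [W] : gcd(b, W) = 1 and b ≡ h^2 (mod W) for some h }. If E ⊆ Z(W) satisfies |E| > |Z(W)|/2, then for every integer n with n ≡ 8 (mod 24) there exist b_1, ..., b_8 ∈ E with n ≡ b_1 + b_2 + ... + b_8 (mod W). -/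
/-!
Modulo `24` the only square unit is `1`, so a sum of eight of them is `8`. The theorem is the case
`A j = B j = E` of a statement about four pairs `(A j, B j)` of sets of square units with
`|A j| + |B j| > |Z|`, proved by adjoining the primes `p ≥ 5` one at a time via the Chinese
remainder theorem. Slicing along the residue mod `p`, an averaging argument over thresholds
`t + u + 1 = |Z(V)|` yields residue sets `LA j, LB j` with `|LA j| + |LB j| > |Z(p)| ≥ (p - 1) / 2`
whose fibres still form dense pairs modulo `V`. By Cauchy–Davenport each `LA j + LB j` has
at least `|Z(p)|` elements and the sum of the four is all of `ZMod p`; once the residue of `n` mod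
`p` is so written, the induction hypothesis is applied to the chosen fibres.
-/

-- The set of reduced quadratic residues modulo `W`.
open Classical in
noncomputable def redQR (W : ℕ) : Finset ℕ :=
  (Finset.Icc 1 W).filter (fun b => Nat.gcd b W = 1 ∧ ∃ h : ℕ, h ^ 2 % W = b % W)

open Finset Pointwise

section SquareUnits

variable {R S : Type*} [Monoid R] [Monoid S] [Fintype R] [Fintype S]

open Classical in
noncomputable def squareUnits (R : Type*) [Monoid R] [Fintype R] : Finset R :=
  univ.filter fun x => IsUnit x ∧ IsSquare x

theorem mem_squareUnits {x : R} : x ∈ squareUnits R ↔ IsUnit x ∧ IsSquare x := by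
  simp [squareUnits]

theorem map_mem_squareUnits_iff (e : R ≃* S) {x : R} :
    e x ∈ squareUnits S ↔ x ∈ squareUnits R := by
  refine mem_squareUnits.trans ((and_congr (MulEquiv.isUnit_map e) ⟨fun h => ?_, .map e⟩).trans
    mem_squareUnits.symm)
  simpa using h.map e.symm

theorem card_squareUnits_congr (e : R ≃* S) : #(squareUnits R) = #(squareUnits S) :=
  card_nbij' e e.symm (fun _ => (map_mem_squareUnits_iff e).2)
    (fun y hy => (map_mem_squareUnits_iff e).1 (by simpa using hy))
    (fun x _ => e.symm_apply_apply x) (fun y _ => e.apply_symm_apply y)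

theorem squareUnits_prod : squareUnits (R × S) = squareUnits R ×ˢ squareUnits S := by
  ext ⟨x, y⟩
  simp only [mem_product, mem_squareUnits, Prod.isUnit_iff]
  constructor
  · rintro ⟨⟨hx, hy⟩, r, hr⟩
    exact ⟨⟨hx, r.1, congrArg Prod.fst hr⟩, hy, r.2, congrArg Prod.snd hr⟩
  · rintro ⟨⟨hx, r, hr⟩, hy, s, hs⟩
    exact ⟨⟨hx, hy⟩, (r, s), Prod.ext hr hs⟩

end SquareUnits

theorem nonempty_of_subset_of_card_lt_add {α : Type*} {T A B : Finset α} (hA : A ⊆ T)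
    (h : #T < #A + #B) : B.Nonempty := by
  have := card_le_card hA
  exact card_pos.mp (by omega)

open Polynomial in
theorem ZMod.prime_le_two_mul_card_squareUnits_add_one {p : ℕ} [hp : Fact p.Prime] (hp2 : p ≠ 2) :
    p ≤ 2 * #(squareUnits (ZMod p)) + 1 := by
  classical
  have hsq : univ.image (fun x : ZMod p => eval x (X ^ 2)) ⊆ insert 0 (squareUnits (ZMod p)) := by
    simp only [subset_iff, mem_image, mem_univ, true_and, mem_insert, mem_squareUnits,
      forall_exists_index, forall_apply_eq_imp_iff, eval_pow, eval_X]
    intro x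
    by_cases hx : x = 0
    · simp [hx]
    · exact .inr ⟨(Ne.isUnit hx).pow 2, .sq x⟩
  have hcount := FiniteField.card_image_polynomial_eval (p := (X ^ 2 : (ZMod p)[X]))
    (by simp)
  rw [ZMod.card, natDegree_X_pow] at hcount
  have := (card_le_card hsq).trans (card_insert_le _ _)
  obtain ⟨k, rfl⟩ := hp.out.odd_of_ne_two hp2
  omega

theorem ZMod.min_le_card_finsetSum {p : ℕ} (hp : p.Prime) {ι : Type*} (t : Finset ι)
    (S : ι → Finset (ZMod p)) (hS : ∀ i ∈ t, (S i).Nonempty) :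
    min p (∑ i ∈ t, (#(S i) - 1) + 1) ≤ #(∑ i ∈ t, S i) := by
  induction t using Finset.cons_induction with
  | empty => simp
  | cons i t hi ih =>
    rw [sum_cons, sum_cons]
    have hrest := ih fun j hj => hS j (mem_cons_of_mem hj)
    have hi := hS i (mem_cons_self i t)
    have hpos : 0 < #(S i) := hi.card_pos
    have hcd := ZMod.cauchy_davenport hp hi (t := ∑ j ∈ t, S j)
      (card_pos.mp (by have := hp.pos; omega))
    omega

theorem ZMod.exists_sum_add_eq {p : ℕ} [Fact p.Prime] {ι : Type*} [Fintype ι]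
    {T : Finset (ZMod p)} {LA LB : ι → Finset (ZMod p)} (hA : ∀ j, LA j ⊆ T) (hB : ∀ j, LB j ⊆ T)
    (hAB : ∀ j, #T < #(LA j) + #(LB j)) (hT : p ≤ Fintype.card ι * (#T - 1) + 1) (c : ZMod p) :
    ∃ r s : ι → ZMod p, (∀ j, r j ∈ LA j) ∧ (∀ j, s j ∈ LB j) ∧ ∑ j, (r j + s j) = c := by
  have hp := (Fact.out : p.Prime)
  have hLA j : (LA j).Nonempty :=
    nonempty_of_subset_of_card_lt_add (hB j) ((add_comm _ _).trans_gt (hAB j))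
  have hLB j : (LB j).Nonempty := nonempty_of_subset_of_card_lt_add (hA j) (hAB j)
  have hT_le : #T ≤ p := by simpa using card_le_univ T
  have hpair j : #T ≤ #(LA j + LB j) :=
    (le_min hT_le (by have := hAB j; omega)).trans (ZMod.cauchy_davenport hp (hLA j) (hLB j))
  have hsum : ∑ j, (LA j + LB j) = univ := by
    refine eq_univ_of_card _ (le_antisymm (card_le_univ _) ?_)
    have hmin := ZMod.min_le_card_finsetSum hp univ (fun j => LA j + LB j)
      (fun j _ => (hLA j).add (hLB j))
    have : Fintype.card ι * (#T - 1) ≤ ∑ j, (#(LA j + LB j) - 1) := by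
      simpa using card_nsmul_le_sum univ (fun j => #(LA j + LB j) - 1) (#T - 1)
        (fun j _ => Nat.sub_le_sub_right (hpair j) 1)
    rw [ZMod.card]
    omega
  have hc : c ∈ ((∑ j, (LA j + LB j) : Finset (ZMod p)) : Set (ZMod p)) := by simp [hsum]
  rw [coe_sum, Set.mem_fintype_sum] at hc
  obtain ⟨x, hx, rfl⟩ := hc
  choose r hr s hs hrs using fun j => mem_add.mp (hx j)
  exact ⟨r, s, hr, hs, by simp only [hrs]⟩

theorem sum_range_card_filter_lt {ι : Type*} (s : Finset ι) (a : ι → ℕ) {K : ℕ}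
    (ha : ∀ i ∈ s, a i ≤ K) : ∑ t ∈ range K, #(s.filter (t < a ·)) = ∑ i ∈ s, a i := by
  simp only [card_filter]
  rw [sum_comm]
  refine sum_congr rfl fun i hi => ?_
  rw [← card_filter, show (range K).filter (· < a i) = range (a i) by
    ext t; simp only [mem_filter, mem_range]; have := ha i hi; omega, card_range]

theorem exists_lt_card_filter_add_card_filter {ι : Type*} (s : Finset ι) (a b : ι → ℕ) {K : ℕ}
    (ha : ∀ i ∈ s, a i ≤ K) (hb : ∀ i ∈ s, b i ≤ K)
    (h : K * #s < ∑ i ∈ s, a i + ∑ i ∈ s, b i) :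
    ∃ t u, t + u + 1 = K ∧ #s < #(s.filter (t < a ·)) + #(s.filter (u < b ·)) := by
  have hb' : ∑ t ∈ range K, #(s.filter (K - 1 - t < b ·)) = ∑ i ∈ s, b i := by
    rw [sum_range_reflect (fun t => #(s.filter (t < b ·))) K, sum_range_card_filter_lt s b hb]
  obtain ⟨t, ht, hlt⟩ := exists_lt_of_sum_lt (s := range K) (f := fun _ => #s)
    (g := fun t => #(s.filter (t < a ·)) + #(s.filter (K - 1 - t < b ·))) (by
      rwa [sum_add_distrib, sum_range_card_filter_lt s a ha, hb', sum_const, card_range,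
        smul_eq_mul])
  exact ⟨t, K - 1 - t, by rw [mem_range] at ht; omega, hlt⟩

section Fibre

variable {R S : Type*}

noncomputable def fibre (A : Finset (R × S)) (y : S) : Finset R :=
  A.preimage (·, y) (Prod.mk_left_injective y).injOn

@[simp]
theorem mem_fibre {A : Finset (R × S)} {x : R} {y : S} : x ∈ fibre A y ↔ (x, y) ∈ A := by
  simp [fibre]

theorem sum_card_fibre {A : Finset (R × S)} {T : Finset S} (hA : ∀ z ∈ A, z.2 ∈ T) :
    ∑ y ∈ T, #(fibre A y) = #A := by
  classical
  rw [card_eq_sum_card_fiberwise hA]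
  refine sum_congr rfl fun y _ => card_nbij' (·, y) Prod.fst ?_ ?_ ?_ ?_
  · intro x hx
    simpa using hx
  · rintro ⟨x, y'⟩ hz
    obtain ⟨hz, rfl⟩ := mem_filter.mp hz
    simpa using hz
  · intro x _
    rfl
  · rintro ⟨x, y'⟩ hz
    obtain ⟨-, rfl⟩ := mem_filter.mp hz
    rfl

variable [Monoid R] [Monoid S] [Fintype R] [Fintype S]

theorem fibre_subset_squareUnits {A : Finset (R × S)} (hA : A ⊆ squareUnits (R × S)) (y : S) :
    fibre A y ⊆ squareUnits R := fun x hx => by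
  have := hA (mem_fibre.mp hx)
  rw [squareUnits_prod, mem_product] at this
  exact this.1

theorem exists_dense_fibres {A B : Finset (R × S)} (hA : A ⊆ squareUnits (R × S))
    (hB : B ⊆ squareUnits (R × S)) (hAB : #(squareUnits (R × S)) < #A + #B) :
    ∃ LA LB : Finset S, LA ⊆ squareUnits S ∧ LB ⊆ squareUnits S ∧
      #(squareUnits S) < #LA + #LB ∧
      ∀ r ∈ LA, ∀ s ∈ LB, #(squareUnits R) < #(fibre A r) + #(fibre B s) := by
  classical
  have hsnd {C : Finset (R × S)} (hC : C ⊆ squareUnits (R × S)) z (hz : z ∈ C) :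
      z.2 ∈ squareUnits S := by
    have := hC hz
    rw [squareUnits_prod, mem_product] at this
    exact this.2
  obtain ⟨t, u, htu, hlt⟩ := exists_lt_card_filter_add_card_filter (squareUnits S)
    (fun y => #(fibre A y)) (fun y => #(fibre B y)) (K := #(squareUnits R))
    (fun y _ => card_le_card (fibre_subset_squareUnits hA y))
    (fun y _ => card_le_card (fibre_subset_squareUnits hB y))
    (by rwa [sum_card_fibre (hsnd hA), sum_card_fibre (hsnd hB), ← card_product,
      ← squareUnits_prod])
  refine ⟨_, _, filter_subset _ _, filter_subset _ _, hlt, fun r hr s hs => ?_⟩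
  have := (mem_filter.mp hr).2
  have := (mem_filter.mp hs).2
  omega

end Fibre

def DensePairsCover (R : Type*) [CommRing R] [Fintype R] : Prop :=
  ∀ A B : Fin 4 → Finset R, (∀ j, A j ⊆ squareUnits R) → (∀ j, B j ⊆ squareUnits R) →
    (∀ j, #(squareUnits R) < #(A j) + #(B j)) → ∀ n : ℤ, n ≡ 8 [ZMOD 24] →
    ∃ a b : Fin 4 → R, (∀ j, a j ∈ A j) ∧ (∀ j, b j ∈ B j) ∧ (n : R) = ∑ j, (a j + b j)

namespace DensePairsCover

variable {R S : Type*} [CommRing R] [Fintype R] [CommRing S] [Fintype S]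

theorem of_ringEquiv (e : R ≃+* S) (hR : DensePairsCover R) : DensePairsCover S := by
  intro A B hA hB hAB n hn
  let f := e.symm.toEquiv.toEmbedding
  have hmap {C : Finset S} (hC : C ⊆ squareUnits S) : C.map f ⊆ squareUnits R := by
    intro x hx
    obtain ⟨y, hy, rfl⟩ := mem_map.mp hx
    exact (map_mem_squareUnits_iff e.symm.toMulEquiv).2 (hC hy)
  obtain ⟨a, b, ha, hb, hab⟩ := hR (fun j => (A j).map f) (fun j => (B j).map f)
    (fun j => hmap (hA j)) (fun j => hmap (hB j))
    (fun j => by simpa [card_squareUnits_congr e.toMulEquiv] using hAB j) n hn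
  refine ⟨fun j => e (a j), fun j => e (b j), fun j => ?_, fun j => ?_, ?_⟩
  · simpa [f, mem_map_equiv] using ha j
  · simpa [f, mem_map_equiv] using hb j
  · simp [← map_add, ← map_sum, ← hab]

theorem zmod_twentyFour : DensePairsCover (ZMod 24) := by
  have hone : ∀ x ∈ squareUnits (ZMod 24), x = 1 := by
    have h : ∀ x : ZMod 24, (∃ y, x * y = 1) → (∃ r, x = r * r) → x = 1 := by decide
    intro x hx
    obtain ⟨hu, hsq⟩ := mem_squareUnits.mp hx
    exact h x (isUnit_iff_exists_inv.mp hu) hsq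
  intro A B hA hB hAB n hn
  choose a ha using fun j =>
    nonempty_of_subset_of_card_lt_add (hB j) ((add_comm _ _).trans_gt (hAB j))
  choose b hb using fun j => nonempty_of_subset_of_card_lt_add (hA j) (hAB j)
  refine ⟨a, b, ha, hb, ?_⟩
  simp only [hone _ (hA _ (ha _)), hone _ (hB _ (hb _))]
  rw [(ZMod.intCast_eq_intCast_iff' n 8 24).mpr hn]
  decide

theorem prod_zmod (hR : DensePairsCover R) {p : ℕ} [Fact p.Prime] (hp : 5 ≤ p) :
    DensePairsCover (R × ZMod p) := by
  intro A B hA hB hAB n hn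
  choose LA LB hLA hLB hL hfibre using fun j => exists_dense_fibres (hA j) (hB j) (hAB j)
  have hcard := ZMod.prime_le_two_mul_card_squareUnits_add_one (p := p) (by omega)
  obtain ⟨r, s, hr, hs, hrs⟩ := ZMod.exists_sum_add_eq hLA hLB hL (by rw [Fintype.card_fin]; omega)
    (n : ZMod p)
  obtain ⟨a, b, ha, hb, hab⟩ := hR (fun j => fibre (A j) (r j)) (fun j => fibre (B j) (s j))
    (fun j => fibre_subset_squareUnits (hA j) _) (fun j => fibre_subset_squareUnits (hB j) _)
    (fun j => hfibre j _ (hr j) _ (hs j)) n hn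
  refine ⟨fun j => (a j, r j), fun j => (b j, s j), fun j => mem_fibre.mp (ha j),
    fun j => mem_fibre.mp (hb j), Prod.ext ?_ ?_⟩
  · simp [Prod.fst_sum, hab]
  · simp [Prod.snd_sum, hrs]

end DensePairsCover

theorem densePairsCover_zmod_twentyFour_mul_prod (P : Finset ℕ) (hP : ∀ q ∈ P, q.Prime ∧ 3 < q)
    (V : ℕ) [NeZero V] (hV : V = 24 * ∏ q ∈ P, q) : DensePairsCover (ZMod V) := by
  induction P using Finset.induction_on generalizing V with
  | empty =>
    subst hV
    exact DensePairsCover.zmod_twentyFour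
  | insert p P hpP ih =>
    obtain ⟨hp, hp3⟩ := hP p (mem_insert_self p P)
    have hP' q (hq : q ∈ P) := hP q (mem_insert_of_mem hq)
    have : Fact p.Prime := ⟨hp⟩
    have : NeZero (24 * ∏ q ∈ P, q) :=
      ⟨mul_ne_zero (by norm_num) (prod_ne_zero_iff.mpr fun q hq => (hP' q hq).1.ne_zero)⟩
    have hcop : Nat.Coprime (24 * ∏ q ∈ P, q) p := by
      show Nat.Coprime (2 ^ 3 * 3 * ∏ q ∈ P, q) p
      have coprime_of_ne q (hq : q.Prime) (hqp : q ≠ p) : q.Coprime p :=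
        (Nat.coprime_primes hq hp).mpr hqp
      refine .mul_left (.mul_left (.pow_left 3 (coprime_of_ne 2 Nat.prime_two (by omega)))
        (coprime_of_ne 3 Nat.prime_three (by omega))) (.prod_left fun q hq => ?_)
      exact coprime_of_ne q (hP' q hq).1 (by rintro rfl; exact hpP hq)
    obtain rfl : V = (24 * ∏ q ∈ P, q) * p := by rw [hV, prod_insert hpP]; ring
    have hp5 := hp.five_le_of_ne_two_of_ne_three (by omega) (by omega)
    exact ((ih hP' _ rfl).prod_zmod hp5).of_ringEquiv (ZMod.chineseRemainder hcop).symm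

section RedQR

variable {W : ℕ}

theorem lt_of_mem_redQR (hW : 1 < W) {b : ℕ} (hb : b ∈ redQR W) : b < W := by
  simp only [redQR, mem_filter, mem_Icc] at hb
  obtain ⟨⟨-, hbW⟩, hgcd, -⟩ := hb
  refine lt_of_le_of_ne hbW ?_
  rintro rfl
  rw [Nat.gcd_self] at hgcd
  omega

theorem natCast_mem_squareUnits_of_mem_redQR [NeZero W] {b : ℕ} (hb : b ∈ redQR W) :
    (b : ZMod W) ∈ squareUnits (ZMod W) := by
  simp only [redQR, mem_filter] at hb
  obtain ⟨-, hgcd, h, hh⟩ := hb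
  refine mem_squareUnits.mpr ⟨(ZMod.isUnit_iff_coprime b W).mpr hgcd, h, ?_⟩
  rw [← (ZMod.natCast_eq_natCast_iff' _ _ _).mpr hh]
  push_cast
  ring

theorem val_mem_redQR_of_mem_squareUnits [Fact (1 < W)] {x : ZMod W}
    (hx : x ∈ squareUnits (ZMod W)) : x.val ∈ redQR W := by
  obtain ⟨hu, r, rfl⟩ := mem_squareUnits.mp hx
  have hne : (r * r).val ≠ 0 := by
    rw [Ne, ZMod.val_eq_zero]
    exact hu.ne_zero
  simp only [redQR, mem_filter, mem_Icc]
  refine ⟨⟨Nat.one_le_iff_ne_zero.mpr hne, (ZMod.val_lt _).le⟩, ?_, r.val, ?_⟩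
  · exact (ZMod.isUnit_iff_coprime _ W).mp (by rwa [ZMod.natCast_zmod_val])
  · rw [← ZMod.natCast_eq_natCast_iff']
    push_cast
    simp [sq]

theorem val_natCast_of_mem_redQR [Fact (1 < W)] {b : ℕ} (hb : b ∈ redQR W) :
    (b : ZMod W).val = b :=
  ZMod.val_cast_of_lt (lt_of_mem_redQR Fact.out hb)

theorem natCast_injOn_redQR [Fact (1 < W)] : Set.InjOn (Nat.cast : ℕ → ZMod W) (redQR W) :=
  fun b hb c hc h => by
    rw [← val_natCast_of_mem_redQR hb, ← val_natCast_of_mem_redQR hc]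
    exact congrArg ZMod.val h

theorem card_redQR [Fact (1 < W)] : #(redQR W) = #(squareUnits (ZMod W)) :=
  card_nbij' Nat.cast ZMod.val (fun _ => natCast_mem_squareUnits_of_mem_redQR)
    (fun _ => val_mem_redQR_of_mem_squareUnits) (fun _ => val_natCast_of_mem_redQR)
    (fun x _ => ZMod.natCast_zmod_val x)

end RedQR

theorem prod_primes_gt_two_eq (w : ℕ) (hw : 4 ≤ w) :
    ∏ p ∈ (range w).filter (fun p => p.Prime ∧ 2 < p), p =
      3 * ∏ p ∈ (range w).filter (fun p => p.Prime ∧ 3 < p), p := by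
  have hsplit : (range w).filter (fun p => p.Prime ∧ 2 < p) =
      insert 3 ((range w).filter (fun p => p.Prime ∧ 3 < p)) := by
    ext q
    simp only [mem_filter, mem_insert, mem_range]
    rcases eq_or_ne q 3 with rfl | hq
    · simp only [Nat.prime_three, true_or, iff_true, true_and]
      omega
    · simp only [hq, false_or]
      constructor <;> rintro ⟨hqw, hqp, hq'⟩ <;> exact ⟨hqw, hqp, by omega⟩
  rw [hsplit, prod_insert (by simp)]

theorem eight_fold_sumset_covers (w : ℕ) (hw : 4 ≤ w)
    (W : ℕ) (hW : W = 8 * ∏ p ∈ (Finset.range w).filter (fun p => p.Prime ∧ 2 < p), p)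
    (E : Finset ℕ) (hE : E ⊆ redQR W) (hcard : (redQR W).card < 2 * E.card)
    (n : ℤ) (hn : n ≡ 8 [ZMOD 24]) :
    ∃ b : Fin 8 → ℕ, (∀ i, b i ∈ E) ∧ n ≡ (∑ i, (b i : ℤ)) [ZMOD (W : ℤ)] := by
  set P := (range w).filter (fun p => p.Prime ∧ 3 < p)
  have hWP : W = 24 * ∏ p ∈ P, p := by rw [hW, prod_primes_gt_two_eq w hw]; ring
  have : Fact (1 < W) := ⟨by
    have := prod_pos fun p (hp : p ∈ P) => (mem_filter.mp hp).2.1.pos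
    omega⟩
  have hcover :=
    densePairsCover_zmod_twentyFour_mul_prod P (fun q hq => (mem_filter.mp hq).2) W hWP
  classical
  set E' := E.image (Nat.cast : ℕ → ZMod W)
  have hE' : E' ⊆ squareUnits (ZMod W) :=
    image_subset_iff.mpr fun b hb => natCast_mem_squareUnits_of_mem_redQR (hE hb)
  have hcardE' : #E' = #E := card_image_of_injOn (natCast_injOn_redQR.mono hE)
  obtain ⟨a, b, ha, hb, hab⟩ := hcover (fun _ => E') (fun _ => E') (fun _ => hE') (fun _ => hE')
    (fun _ => by rw [hcardE', ← card_redQR]; omega) n hn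
  choose a' ha' hca using fun j => mem_image.mp (ha j)
  choose b' hb' hcb using fun j => mem_image.mp (hb j)
  refine ⟨Fin.append a' b', (Fin.forall_fin_add (m := 4) (n := 4) (Fin.append a' b' · ∈ E)).mpr
    ⟨fun j => by rw [Fin.append_left]; exact ha' j, fun j => by rw [Fin.append_right]; exact hb' j⟩,
    ?_⟩
  rw [← ZMod.intCast_eq_intCast_iff, hab]
  push_cast
  change _ = ∑ i : Fin (4 + 4), _
  simp only [Fin.sum_univ_add, Fin.append_left, Fin.append_right, hca, hcb, sum_add_distrib]
end

section
/- Let w ≥ 4 and W = 24 * W' with gcd(W', 24) = 1, where W = 8 * ∏_{2 < p < w, p prime} p. If b, b' are distinct reduced quadratic residues modulo W, then W' does not divide b − b'. -/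
theorem Nat.sq_modEq_one_of_coprime_24 {h : ℕ} (hh : h.Coprime 24) : h ^ 2 ≡ 1 [MOD 24] := by
  have key : ∀ r < 24, r.Coprime 24 → r ^ 2 % 24 = 1 := by decide
  rw [Nat.ModEq, Nat.pow_mod]
  exact key _ (Nat.mod_lt _ (by norm_num)) ((Nat.mod_modEq h 24).gcd_eq.trans hh)

theorem modEq_one_of_mem_redQR {W b : ℕ} (h24 : 24 ∣ W) (hb : b ∈ redQR W) : b ≡ 1 [MOD 24] := by
  classical
  obtain ⟨-, hbW, h, hhb : h ^ 2 ≡ b [MOD W]⟩ := Finset.mem_filter.mp hb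
  have hhW : h.Coprime W :=
    (Nat.coprime_pow_left_iff two_pos h W).mp (hhb.gcd_eq.trans hbW)
  exact (hhb.of_dvd h24).symm.trans (Nat.sq_modEq_one_of_coprime_24 (hhW.coprime_dvd_right h24))

theorem eq_of_modEq_of_mem_redQR {W b b' : ℕ} (hb : b ∈ redQR W) (hb' : b' ∈ redQR W)
    (hbb' : b ≡ b' [MOD W]) : b = b' := by
  simp only [redQR, Finset.mem_filter, Finset.mem_Icc] at hb hb'
  refine hbb'.eq_of_abs_lt (abs_sub_lt_iff.mpr ⟨?_, ?_⟩) <;> omega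

theorem redQR_injective_mod_W'_general (W W' : ℕ)
    (hW24 : W = 24 * W') (hgcd : Nat.gcd W' 24 = 1)
    (b b' : ℕ) (hb : b ∈ redQR W) (hb' : b' ∈ redQR W) (hne : b ≠ b') :
    ¬ ((W' : ℤ) ∣ (b : ℤ) - (b' : ℤ)) := by
  intro hdvd
  have h24 : 24 ∣ W := ⟨W', hW24⟩
  have hmod24 : b' ≡ b [MOD 24] :=
    (modEq_one_of_mem_redQR h24 hb').trans (modEq_one_of_mem_redQR h24 hb).symm
  have hmodW : b' ≡ b [MOD W] := by
    rw [hW24, mul_comm]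
    exact (Nat.modEq_and_modEq_iff_modEq_mul hgcd).mp ⟨Nat.modEq_iff_dvd.mpr hdvd, hmod24⟩
  exact hne (eq_of_modEq_of_mem_redQR hb' hb hmodW).symm

theorem redQR_injective_mod_W' (w W W' : ℕ) (hw : 4 ≤ w)
    (hW : W = 8 * ∏ p ∈ (Finset.range w).filter (fun p => p.Prime ∧ 2 < p), p)
    (hW24 : W = 24 * W') (hgcd : Nat.gcd W' 24 = 1)
    (b b' : ℕ) (hb : b ∈ redQR W) (hb' : b' ∈ redQR W) (hne : b ≠ b') :
    ¬ ((W' : ℤ) ∣ (b : ℤ) - (b' : ℤ)) :=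
  redQR_injective_mod_W'_general W W' hW24 hgcd b b' hb hb' hne
end

section
/- Let W, q, a, b be positive integers with gcd(a, q) = 1, and let h be coprime to W. Let t = gcd(q, W). If the sum over l ∈ [q] with gcd(Wl + h, q) = 1 of e((W l^2 + 2 h l) a / q) is decomposed by the residue of Wl + h mod q, then for each l* ∈ [q] coprime to q with t | (l* − h), the congruence W l + h ≡ l* (mod q) has exactly t solutions l ∈ [q], and the corresponding partial sum equals e((W z^2 + 2 h z) a / q) · Σ_{y ∈ [t]} e(2 h a y / t) for any fixed solution z. In particular, if t does not divide 2, this partial sum vanishes, and hence the whole sum vanishes. -/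
/-!
Reduce everything modulo `q`: the phase `e(m / q)` is the standard additive character of
`ZMod q`, and `[q]` is a system of representatives of `ZMod q`. There the solutions of
`W x + h = l*` form a coset `z + K` of the kernel `K` of multiplication by `W`, and since
`W k = 0` the phase is linear on the coset:
`a (W (z + k)² + 2 h (z + k)) = a (W z² + 2 h z) + 2 h a k`.
The kernel `K` consists of the multiples of `q / t`, so on `K` the character `k ↦ e(2 h a k / q)`
becomes `y ↦ e(2 h a y / t)` on `ZMod t`. Its sum vanishes unless `t ∣ 2 h a`, i.e. (as `t` is
coprime to `h a`) unless `t ∣ 2`; so if `t ∤ 2` every fiber sum vanishes, hence so does the sum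
over units.
-/

/-- `e x = exp(2πi x)`. -/
noncomputable def e (x : ℝ) : ℂ := Complex.exp (2 * Real.pi * Complex.I * x)

open Finset
open ZMod (stdAddChar)

lemma e_natCast_div {q : ℕ} [NeZero q] (m : ℕ) :
    e ((m : ℝ) / q) = stdAddChar (m : ZMod q) := by
  rw [← Int.cast_natCast (R := ZMod q), ZMod.stdAddChar_coe, e]
  push_cast
  ring_nf

lemma sum_filter_comp_eq_zero {ι κ M : Type*} [Fintype ι] [Fintype κ] [DecidableEq κ]
    [AddCommMonoid M] (g : ι → κ) (p : κ → Prop) [DecidablePred p] (F : ι → M)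
    (h : ∀ j, ∑ x with g x = j, F x = 0) : ∑ x with p (g x), F x = 0 := by
  rw [← sum_fiberwise _ g F]
  refine sum_eq_zero fun j _ => ?_
  rw [filter_filter]
  by_cases hj : p j
  · rw [← h j]
    refine sum_congr (filter_congr fun x _ => ?_) fun _ _ => rfl
    exact ⟨And.right, fun hx => ⟨hx ▸ hj, hx⟩⟩
  · rw [filter_false_of_mem (fun x _ (hx : p (g x) ∧ g x = j) => hj (hx.2 ▸ hx.1)), sum_empty]

section QuadraticFiber

variable {R M : Type*} [CommRing R] [Fintype R] [DecidableEq R] [CommRing M]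

lemma filter_mul_add_eq_eq_map {W h r z : R} (hz : W * z + h = r) :
    ({x | W * x + h = r} : Finset R) =
      ({k | W * k = 0} : Finset R).map (Equiv.addLeft z).toEmbedding := by
  ext x
  simp only [mem_map, mem_filter, mem_univ, true_and, Equiv.coe_toEmbedding, Equiv.coe_addLeft]
  constructor
  · intro hx
    exact ⟨x - z, by linear_combination hx - hz, by ring⟩
  · rintro ⟨k, hk, rfl⟩
    linear_combination hz + hk

lemma sum_quadratic_fiber (ψ : AddChar R M) (a : R) {W h r z : R} (hz : W * z + h = r) :
    ∑ x with W * x + h = r, ψ (a * (W * x ^ 2 + 2 * h * x)) =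
      ψ (a * (W * z ^ 2 + 2 * h * z)) * ∑ k with W * k = 0, ψ (2 * h * a * k) := by
  rw [filter_mul_add_eq_eq_map hz, sum_map, mul_sum]
  refine sum_congr rfl fun k hk => ?_
  rw [← AddChar.map_add_eq_mul, Equiv.coe_toEmbedding, Equiv.coe_addLeft]
  congr 1
  linear_combination (a * (2 * z + k)) * (mem_filter.mp hk).2

lemma sum_quadratic_fiber_eq_zero (ψ : AddChar R M) (a W h r : R)
    (hker : ∑ k with W * k = 0, ψ (2 * h * a * k) = 0) :
    ∑ x with W * x + h = r, ψ (a * (W * x ^ 2 + 2 * h * x)) = 0 := by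
  by_cases hr : ∃ z, W * z + h = r
  · obtain ⟨z, hz⟩ := hr
    rw [sum_quadratic_fiber ψ a hz, hker, mul_zero]
  · exact sum_eq_zero fun x hx => absurd ⟨x, (mem_filter.mp hx).2⟩ hr

end QuadraticFiber

namespace ZMod

lemma exists_natCast_mul_eq {q W : ℕ} {m : ℤ} (hm : (q.gcd W : ℤ) ∣ m) :
    ∃ x : ZMod q, (W : ZMod q) * x = m := by
  obtain ⟨c, rfl⟩ := hm
  refine ⟨(q.gcdB W * c : ℤ), ?_⟩
  rw [Nat.gcd_eq_gcd_ab]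
  push_cast
  rw [natCast_self]
  ring

variable {q : ℕ} [NeZero q]

lemma sum_Icc_one_eq_sum {M : Type*} [AddCommMonoid M] (g : ZMod q → M) :
    ∑ l ∈ Icc 1 q, g l = ∑ x, g x := by
  refine sum_nbij' (fun l => (l : ZMod q)) (fun x => (x - 1).val + 1) (by simp) ?_ ?_ ?_ (by simp)
  · intro x _
    simpa [Nat.one_le_iff_ne_zero, Nat.add_one_le_iff] using val_lt (x - 1)
  · intro l hl
    obtain ⟨h1, h2⟩ := mem_Icc.mp (mem_coe.mp hl)
    have : (l : ZMod q) - 1 = ((l - 1 : ℕ) : ZMod q) := by push_cast [Nat.cast_sub h1]; ring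
    rw [this, val_natCast, Nat.mod_eq_of_lt (by omega)]
    omega
  · intro x _
    simp

lemma sum_filter_Icc_one_eq_sum_filter {M : Type*} [AddCommMonoid M] (p : ZMod q → Prop)
    [DecidablePred p] (g : ZMod q → M) :
    ∑ l ∈ Icc 1 q with p ((l : ℕ) : ZMod q), g l = ∑ x with p x, g x := by
  rw [sum_filter, sum_filter, sum_Icc_one_eq_sum fun x => if p x then g x else 0]

lemma sum_stdAddChar_natCast_mul_eq_zero {c : ℕ} (hc : ¬ q ∣ c) :
    ∑ y : ZMod q, stdAddChar ((c : ZMod q) * y) = 0 := by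
  simp_rw [mul_comm (c : ZMod q)]
  rw [AddChar.sum_mulShift _ (isPrimitive_stdAddChar q),
    if_neg ((natCast_eq_zero_iff c q).not.mpr hc), Nat.cast_zero]

lemma natCast_mul_natCast_eq_zero_iff (W m : ℕ) :
    (W : ZMod q) * m = 0 ↔ q / q.gcd W ∣ m := by
  rw [← Nat.cast_mul, natCast_eq_zero_iff, ← Nat.dvd_gcd_mul_iff_dvd_mul,
    Nat.div_dvd_iff_dvd_mul (Nat.gcd_dvd_left q W) (Nat.gcd_pos_of_pos_left W (NeZero.pos q))]

lemma sum_filter_natCast_mul_eq_zero {M : Type*} [AddCommMonoid M] (W : ℕ) [NeZero (q.gcd W)]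
    (g : ZMod q → M) :
    ∑ k with (W : ZMod q) * k = 0, g k =
      ∑ y : ZMod (q.gcd W), g (y.val * (q / q.gcd W) : ℕ) := by
  have htd : q.gcd W * (q / q.gcd W) = q := Nat.mul_div_cancel' (Nat.gcd_dvd_left q W)
  have hd : 0 < q / q.gcd W := Nat.pos_of_mul_pos_left (htd ▸ NeZero.pos q)
  symm
  refine sum_nbij' (fun y => (y.val * (q / q.gcd W) : ℕ)) (fun k => (k.val / (q / q.gcd W) : ℕ))
    ?_ (by simp) ?_ ?_ (by simp)
  · intro y _
    rw [mem_filter, natCast_mul_natCast_eq_zero_iff]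
    exact ⟨mem_univ _, dvd_mul_left _ _⟩
  · intro y _
    have hlt : y.val * (q / q.gcd W) < q := (Nat.mul_lt_mul_of_pos_right y.val_lt hd).trans_eq htd
    simp only [val_natCast, Nat.mod_eq_of_lt hlt, Nat.mul_div_cancel _ hd, natCast_val, cast_id',
      id_eq]
  · intro k hk
    rw [mem_filter, ← natCast_zmod_val k, natCast_mul_natCast_eq_zero_iff] at hk
    have hlt : k.val / (q / q.gcd W) < q.gcd W :=
      (Nat.div_lt_iff_lt_mul hd).mpr (k.val_lt.trans_eq htd.symm)
    rw [val_natCast, Nat.mod_eq_of_lt hlt, Nat.div_mul_cancel hk.2, natCast_zmod_val]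

lemma card_filter_natCast_mul_eq_zero (W : ℕ) [NeZero (q.gcd W)] :
    #{k : ZMod q | (W : ZMod q) * k = 0} = q.gcd W := by
  rw [card_eq_sum_ones, sum_filter_natCast_mul_eq_zero, sum_const, card_univ, ZMod.card,
    smul_eq_mul, mul_one]

lemma sum_filter_natCast_mul_eq_zero_stdAddChar (W c : ℕ) [NeZero (q.gcd W)] :
    ∑ k with (W : ZMod q) * k = 0, stdAddChar ((c : ZMod q) * k) =
      ∑ y : ZMod (q.gcd W), stdAddChar ((c : ZMod (q.gcd W)) * y) := by
  rw [sum_filter_natCast_mul_eq_zero]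
  refine sum_congr rfl fun y _ => ?_
  conv_rhs => rw [← natCast_zmod_val y]
  rw [← Nat.cast_mul, ← Nat.cast_mul, ← e_natCast_div, ← e_natCast_div]
  have hq : (q : ℝ) ≠ 0 := Nat.cast_ne_zero.mpr (NeZero.ne _)
  have hg : (q.gcd W : ℝ) ≠ 0 := Nat.cast_ne_zero.mpr (NeZero.ne _)
  congr 1
  push_cast [Nat.cast_div (Nat.gcd_dvd_left q W) hg]
  field_simp

end ZMod

lemma sum_Icc_one_e_natCast_mul_div {n : ℕ} [NeZero n] (c : ℕ) :
    ∑ y ∈ Icc 1 n, e (((c * y : ℕ) : ℝ) / n) =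
      ∑ y : ZMod n, stdAddChar ((c : ZMod n) * y) := by
  rw [← ZMod.sum_Icc_one_eq_sum]
  refine sum_congr rfl fun y _ => ?_
  rw [e_natCast_div, Nat.cast_mul]

lemma mul_add_mod_eq_mod_iff (q W h l r : ℕ) :
    (W * l + h) % q = r % q ↔ (W : ZMod q) * l + h = r := by
  rw [← ZMod.natCast_eq_natCast_iff']
  push_cast
  rfl

section QuadraticPhase

variable {q : ℕ} [NeZero q] (W a h : ℕ)

lemma card_filter_Icc_one_mod_eq [NeZero (q.gcd W)] {r : ℕ} (hr : (q.gcd W : ℤ) ∣ r - h) :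
    #{l ∈ Icc 1 q | (W * l + h) % q = r % q} = q.gcd W := by
  obtain ⟨z, hz⟩ := ZMod.exists_natCast_mul_eq hr
  have hz' : (W : ZMod q) * z + h = r := by rw [hz]; push_cast; ring
  rw [filter_congr fun l _ => mul_add_mod_eq_mod_iff q W h l r, card_eq_sum_ones,
    ZMod.sum_filter_Icc_one_eq_sum_filter (fun x : ZMod q => (W : ZMod q) * x + h = r) fun _ => 1,
    ← card_eq_sum_ones, filter_mul_add_eq_eq_map hz', card_map,
    ZMod.card_filter_natCast_mul_eq_zero]

lemma e_quadratic_eq_stdAddChar (l : ℕ) :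
    e ((((W * l ^ 2 + 2 * h * l) * a : ℕ) : ℝ) / q) =
      stdAddChar ((a : ZMod q) *
        ((W : ZMod q) * (l : ZMod q) ^ 2 + 2 * (h : ZMod q) * (l : ZMod q))) := by
  rw [e_natCast_div]
  push_cast
  ring_nf

lemma sum_filter_Icc_one_e_quadratic (P : ℕ → Prop) [DecidablePred P] (p : ZMod q → Prop)
    [DecidablePred p] (hP : ∀ l : ℕ, P l ↔ p l) :
    ∑ l ∈ Icc 1 q with P l, e ((((W * l ^ 2 + 2 * h * l) * a : ℕ) : ℝ) / q) =
      ∑ x with p x,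
        stdAddChar ((a : ZMod q) * ((W : ZMod q) * x ^ 2 + 2 * (h : ZMod q) * x)) := by
  simp_rw [hP, e_quadratic_eq_stdAddChar]
  exact ZMod.sum_filter_Icc_one_eq_sum_filter p
    fun x => stdAddChar ((a : ZMod q) * ((W : ZMod q) * x ^ 2 + 2 * (h : ZMod q) * x))

end QuadraticPhase

theorem partial_sum_decomposition_general (W q a h t : ℕ)
    (hq : 0 < q)
    (haq : Nat.gcd a q = 1) (hhW : Nat.gcd h W = 1) (ht : t = Nat.gcd q W)
    (l' : ℕ)
    (hdvd : (t : ℤ) ∣ ((l' : ℤ) - (h : ℤ))) :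
    (((Finset.Icc 1 q).filter (fun l => (W * l + h) % q = l' % q)).card = t)
    ∧ (∀ z ∈ (Finset.Icc 1 q).filter (fun l => (W * l + h) % q = l' % q),
        (∑ l ∈ (Finset.Icc 1 q).filter (fun l => (W * l + h) % q = l' % q),
          e ((((W * l ^ 2 + 2 * h * l) * a : ℕ) : ℝ) / q))
        = e ((((W * z ^ 2 + 2 * h * z) * a : ℕ) : ℝ) / q)
            * ∑ y ∈ Finset.Icc 1 t, e (((2 * h * a * y : ℕ) : ℝ) / t))
    ∧ (¬ t ∣ 2 →
        ((∑ l ∈ (Finset.Icc 1 q).filter (fun l => (W * l + h) % q = l' % q),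
            e ((((W * l ^ 2 + 2 * h * l) * a : ℕ) : ℝ) / q)) = 0
        ∧ (∑ l ∈ (Finset.Icc 1 q).filter (fun l => Nat.gcd (W * l + h) q = 1),
            e ((((W * l ^ 2 + 2 * h * l) * a : ℕ) : ℝ) / q)) = 0)) := by
  classical
  subst ht
  have : NeZero q := ⟨hq.ne'⟩
  have : NeZero (q.gcd W) := ⟨(Nat.gcd_pos_of_pos_left W hq).ne'⟩
  have hfiber (r : ℕ) := sum_filter_Icc_one_e_quadratic W a h (fun l => (W * l + h) % q = r % q)
    (fun x : ZMod q => (W : ZMod q) * x + h = r) (mul_add_mod_eq_mod_iff q W h · r)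
  have hker : ∑ k : ZMod q with (W : ZMod q) * k = 0,
      stdAddChar (2 * (h : ZMod q) * (a : ZMod q) * k) =
        ∑ y : ZMod (q.gcd W), stdAddChar (((2 * h * a : ℕ) : ZMod (q.gcd W)) * y) := by
    rw [← ZMod.sum_filter_natCast_mul_eq_zero_stdAddChar]
    push_cast
    rfl
  refine ⟨card_filter_Icc_one_mod_eq W h hdvd, fun z hz => ?_, fun h2 => ?_⟩
  · have hz' := (mul_add_mod_eq_mod_iff q W h z l').mp (mem_filter.mp hz).2
    rw [hfiber, sum_quadratic_fiber _ _ hz',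
      ← e_quadratic_eq_stdAddChar, hker, sum_Icc_one_e_natCast_mul_div]
  · have hta : (q.gcd W).Coprime a :=
      (Nat.coprime_comm.mp haq).coprime_dvd_left (q.gcd_dvd_left W)
    have hth : (q.gcd W).Coprime h :=
      (Nat.coprime_comm.mp hhW).coprime_dvd_left (q.gcd_dvd_right W)
    have hcop : ¬ q.gcd W ∣ 2 * h * a := fun hd =>
      h2 (hth.dvd_of_dvd_mul_right (hta.dvd_of_dvd_mul_right hd))
    have hvanish (r : ZMod q) := sum_quadratic_fiber_eq_zero stdAddChar (a : ZMod q) W h r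
      (hker.trans (ZMod.sum_stdAddChar_natCast_mul_eq_zero hcop))
    refine ⟨by rw [hfiber]; exact hvanish _, ?_⟩
    rw [sum_filter_Icc_one_e_quadratic W a h _ (fun x : ZMod q => IsUnit ((W : ZMod q) * x + h))
      fun l => by rw [← Nat.coprime_iff_gcd_eq_one, ← ZMod.isUnit_iff_coprime]; push_cast; rfl]
    exact sum_filter_comp_eq_zero (fun x => (W : ZMod q) * x + h) IsUnit _ hvanish

theorem partial_sum_decomposition (W q a b h t : ℕ)
    (hW : 0 < W) (hq : 0 < q) (ha : 0 < a) (hb : 0 < b)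
    (haq : Nat.gcd a q = 1) (hhW : Nat.gcd h W = 1) (ht : t = Nat.gcd q W)
    (l' : ℕ) (hl' : l' ∈ Finset.Icc 1 q) (hl'q : Nat.gcd l' q = 1)
    (hdvd : (t : ℤ) ∣ ((l' : ℤ) - (h : ℤ))) :
    (((Finset.Icc 1 q).filter (fun l => (W * l + h) % q = l' % q)).card = t)
    ∧ (∀ z ∈ (Finset.Icc 1 q).filter (fun l => (W * l + h) % q = l' % q),
        (∑ l ∈ (Finset.Icc 1 q).filter (fun l => (W * l + h) % q = l' % q),
          e ((((W * l ^ 2 + 2 * h * l) * a : ℕ) : ℝ) / q))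
        = e ((((W * z ^ 2 + 2 * h * z) * a : ℕ) : ℝ) / q)
            * ∑ y ∈ Finset.Icc 1 t, e (((2 * h * a * y : ℕ) : ℝ) / t))
    ∧ (¬ t ∣ 2 →
        ((∑ l ∈ (Finset.Icc 1 q).filter (fun l => (W * l + h) % q = l' % q),
            e ((((W * l ^ 2 + 2 * h * l) * a : ℕ) : ℝ) / q)) = 0
        ∧ (∑ l ∈ (Finset.Icc 1 q).filter (fun l => Nat.gcd (W * l + h) q = 1),
            e ((((W * l ^ 2 + 2 * h * l) * a : ℕ) : ℝ) / q)) = 0)) :=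
  partial_sum_decomposition_general W q a h t hq haq hhW ht l' hdvd
end

section
/- Let W = 8K with K odd, and let b be coprime to W. Then Σ_{h ∈ [W], gcd(h,W)=1, h^2 ≡ b (mod W)} e((h^2 − b)/(2W)) = 0, where e(x) = exp(2πi x). -/
/-!
Modulo `8K`, `(h + 4K)² ≡ h²`, so the shift `h ↦ h + 4K` preserves the summation condition,
while `((h + 4K)² - b) / 16K` exceeds `(h² - b) / 16K` by `(h + 2K) / 2`, a half-integer because
units mod `8K` are odd. Hence the summand is antiperiodic with antiperiod `4K`, and its sum over
the full period `[1, 8K]` vanishes.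
-/

open Finset Function

theorem e_add_nat_div_two (x : ℝ) (m : ℕ) : e (x + m / 2) = (-1) ^ m * e x := by
  have harg : 2 * (Real.pi : ℂ) * Complex.I * ((x + m / 2 : ℝ) : ℂ)
      = m * (Real.pi * Complex.I) + 2 * Real.pi * Complex.I * x := by
    push_cast; ring
  rw [e, harg, Complex.exp_add, Complex.exp_nat_mul, Complex.exp_pi_mul_I, e]

theorem Function.Antiperiodic.sum_Ioc_two_mul_eq_zero {M : Type*} [AddCommGroup M] {f : ℕ → M}
    {c : ℕ} (hf : Antiperiodic f c) : ∑ k ∈ Ioc 0 (2 * c), f k = 0 := by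
  have hshift : (Ioc 0 c).map (addRightEmbedding c) = Ioc c (2 * c) := by
    rw [map_add_right_Ioc, zero_add, two_mul]
  rw [← sum_Ioc_consecutive f (Nat.zero_le c) (by omega), ← hshift,
    hf.sum_map_addRightEmbedding, add_neg_cancel]

theorem add_four_mul_sq_mod (h K : ℕ) : (h + 4 * K) ^ 2 % (8 * K) = h ^ 2 % (8 * K) := by
  have : (h + 4 * K) ^ 2 = h ^ 2 + (h + 2 * K) * (8 * K) := by ring
  rw [this, Nat.add_mul_mod_self_right]

theorem coprime_add_four_mul_iff (h K : ℕ) :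
    (h + 4 * K).Coprime (8 * K) ↔ h.Coprime (8 * K) := by
  rw [← Nat.coprime_pow_left_iff two_pos, ← Nat.coprime_pow_left_iff two_pos h,
    Nat.Coprime, Nat.Coprime, Nat.ModEq.gcd_eq (add_four_mul_sq_mod h K)]

theorem e_sq_add_four_mul {K : ℕ} (hK : K ≠ 0) (b : ℤ) {h : ℕ} (hh : Odd h) :
    e (((((h + 4 * K : ℕ) : ℤ) ^ 2 - b : ℤ) : ℝ) / (2 * (8 * K : ℕ)))
      = - e ((((h : ℤ) ^ 2 - b : ℤ) : ℝ) / (2 * (8 * K : ℕ))) := by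
  have harg : ((((h + 4 * K : ℕ) : ℤ) ^ 2 - b : ℤ) : ℝ) / (2 * (8 * K : ℕ))
      = ((((h : ℤ) ^ 2 - b : ℤ) : ℝ) / (2 * (8 * K : ℕ))) + (h + 2 * K : ℕ) / 2 := by
    push_cast
    field_simp
    ring
  rw [harg, e_add_nat_div_two, (hh.add_even (even_two_mul K)).neg_one_pow, neg_one_mul]

theorem sqrt_sum_vanishes_general (K W b : ℕ) (hW : W = 8 * K) :
    (∑ h ∈ (Finset.Icc 1 W).filter (fun h => Nat.gcd h W = 1 ∧ h ^ 2 % W = b % W),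
        e (((((h : ℤ) ^ 2 - (b : ℤ)) : ℤ) : ℝ) / (2 * W))) = 0 := by
  subst hW
  rcases eq_or_ne K 0 with rfl | hK
  · simp
  have hperiod : Icc 1 (8 * K) = Ioc 0 (2 * (4 * K)) := by
    rw [← Icc_add_one_left_eq_Ioc]; ring_nf
  rw [sum_filter, hperiod]
  refine Antiperiodic.sum_Ioc_two_mul_eq_zero fun h => ?_
  have hshift : (h + 4 * K).gcd (8 * K) = 1 ∧ (h + 4 * K) ^ 2 % (8 * K) = b % (8 * K)
      ↔ h.gcd (8 * K) = 1 ∧ h ^ 2 % (8 * K) = b % (8 * K) := by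
    rw [← Nat.Coprime, ← Nat.Coprime, coprime_add_four_mul_iff, add_four_mul_sq_mod]
  by_cases hP : h.gcd (8 * K) = 1 ∧ h ^ 2 % (8 * K) = b % (8 * K)
  · have hodd : Odd h :=
      Nat.Coprime.odd_of_right (Nat.Coprime.coprime_dvd_right ⟨4 * K, by ring⟩ hP.1)
    rw [if_pos (hshift.2 hP), if_pos hP, e_sq_add_four_mul hK b hodd]
  · rw [if_neg (hshift.not.2 hP), if_neg hP, neg_zero]

theorem sqrt_sum_vanishes (K W b : ℕ) (hK : Odd K) (hW : W = 8 * K)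
    (hb : Nat.gcd b W = 1) :
    (∑ h ∈ (Finset.Icc 1 W).filter (fun h => Nat.gcd h W = 1 ∧ h ^ 2 % W = b % W),
        e (((((h : ℤ) ^ 2 - (b : ℤ)) : ℤ) : ℝ) / (2 * W))) = 0 :=
  sqrt_sum_vanishes_general K W b hW
end

section
/- For every ε > 0 there is a constant C_ε such that for all positive integers k, r with gcd(k, r) = 1, the Gauss sum G(k, r) = Σ_{l ∈ [k], gcd(l, k) = 1} e(r l^2 / k) satisfies |G(k, r)| ≤ C_ε k^{1/2 + ε}. -/
/-- The Gauss sum over reduced residues: `G k r = Σ_{l ∈ [k], (l,k)=1} e(r l² / k)`. -/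
noncomputable def G (k r : ℕ) : ℂ :=
  ∑ l ∈ (Finset.Icc 1 k).filter (fun l => Nat.gcd l k = 1),
    e (((r * l ^ 2 : ℕ) : ℝ) / k)

/-!
Möbius inversion over `d ∣ gcd(l, k)` writes `G(k, r)` as `Σ_{d ∣ k} μ(d) S(k/d, r d)`, where
`S(n, c) = Σ_{x mod n} e(c x² / n)` is a complete quadratic Gauss sum. Weyl differencing
(`x = y + h`) and orthogonality of additive characters give `|S(n, c)|² ≤ n · #{h : 2 c h ≡ 0}
≤ n · gcd(2c, n)`, which is at most `2k` for `n = k/d`, `c = r d` and `gcd(r, k) = 1`. Hence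
`|G(k, r)| ≤ τ(k) √(2k)`, and the divisor bound `τ(k) ≪_ε k^ε` finishes the proof.
-/

open Finset Real
open scoped ArithmeticFunction.Moebius

theorem ArithmeticFunction.sum_divisors_moebius_smul {M : Type*} [AddCommGroup M] (n : ℕ)
    (x : M) :
    ∑ d ∈ n.divisors, μ d • x = if n = 1 then x else 0 := by
  rw [← sum_smul, ← coe_mul_zeta_apply, moebius_mul_coe_zeta, one_apply]
  split_ifs <;> simp

theorem Nat.filter_Icc_dvd_eq_map {d : ℕ} (hd : d ≠ 0) (k : ℕ) :
    {l ∈ Icc 1 k | d ∣ l} = (Icc 1 (k / d)).map ⟨(d * ·), mul_right_injective₀ hd⟩ := by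
  ext l
  simp only [mem_filter, mem_Icc, mem_map, Function.Embedding.coeFn_mk]
  constructor
  · rintro ⟨⟨h1, hk⟩, m, rfl⟩
    refine ⟨m, ⟨Nat.pos_of_ne_zero (right_ne_zero_of_mul (Nat.one_le_iff_ne_zero.1 h1)),
      (Nat.le_div_iff_mul_le (Nat.pos_of_ne_zero hd)).2 (by rwa [mul_comm])⟩, rfl⟩
  · rintro ⟨m, ⟨h1, hk⟩, rfl⟩
    refine ⟨⟨?_, ?_⟩, dvd_mul_right d m⟩
    · exact Nat.one_le_iff_ne_zero.2 (mul_ne_zero hd (by omega))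
    · rw [mul_comm]; exact (Nat.le_div_iff_mul_le (Nat.pos_of_ne_zero hd)).1 hk

theorem sum_filter_coprime_eq_sum_divisors_moebius {M : Type*} [AddCommGroup M] (k : ℕ)
    (f : ℕ → M) :
    ∑ l ∈ Icc 1 k with l.gcd k = 1, f l =
      ∑ d ∈ k.divisors, μ d • ∑ m ∈ Icc 1 (k / d), f (d * m) := by
  rcases eq_or_ne k 0 with rfl | hk
  · simp
  calc ∑ l ∈ Icc 1 k with l.gcd k = 1, f l
      = ∑ l ∈ Icc 1 k, ∑ d ∈ (l.gcd k).divisors, μ d • f l := by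
        rw [sum_filter]
        exact sum_congr rfl fun l _ => (ArithmeticFunction.sum_divisors_moebius_smul _ _).symm
    _ = ∑ d ∈ k.divisors, ∑ l ∈ Icc 1 k with d ∣ l, μ d • f l := by
        refine sum_comm' fun l d => ?_
        simp only [mem_filter, Nat.mem_divisors, Nat.dvd_gcd_iff, ne_eq, Nat.gcd_eq_zero_iff, hk,
          and_false, not_false_eq_true, and_true]
        tauto
    _ = _ := by
        refine sum_congr rfl fun d hd => ?_
        rw [← smul_sum, Nat.filter_Icc_dvd_eq_map (Nat.ne_of_gt (Nat.pos_of_mem_divisors hd)),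
          sum_map]
        rfl

theorem ZMod.sum_range_natCast {M : Type*} [AddCommMonoid M] (n : ℕ) [NeZero n]
    (f : ZMod n → M) : ∑ m ∈ range n, f m = ∑ x, f x := by
  obtain ⟨N, rfl⟩ : ∃ N, n = N + 1 := Nat.exists_eq_succ_of_ne_zero (NeZero.ne n)
  rw [sum_range]
  exact Fintype.sum_congr _ _ fun i => congrArg f (Fin.cast_val_eq_self i)

theorem ZMod.sum_Icc_natCast {M : Type*} [AddCommMonoid M] (n : ℕ) [NeZero n] (f : ZMod n → M) :
    ∑ m ∈ Icc 1 n, f m = ∑ x, f x := by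
  rw [← Ico_add_one_right_eq_Icc, sum_Ico_eq_sum_range, Nat.add_sub_cancel]
  simp_rw [Nat.cast_add, Nat.cast_one, add_comm (1 : ZMod n)]
  rw [ZMod.sum_range_natCast n (fun x => f (x + 1))]
  exact Equiv.sum_comp (Equiv.addRight 1) f

theorem AddChar.norm_sum_mul_sq_sq_le {R : Type*} [CommRing R] [Fintype R] [DecidableEq R]
    {ψ : AddChar R ℂ} (hψ : ψ.IsPrimitive) (c : R) :
    ‖∑ x, ψ (c * x ^ 2)‖ ^ 2 ≤ Fintype.card R * #{h | 2 * c * h = 0} := by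
  have hdiff : (∑ x, ψ (c * x ^ 2)) * starRingEnd ℂ (∑ x, ψ (c * x ^ 2)) =
      ∑ h, ψ (c * h ^ 2) * if 2 * c * h = 0 then (Fintype.card R : ℂ) else 0 := by
    calc (∑ x, ψ (c * x ^ 2)) * starRingEnd ℂ (∑ x, ψ (c * x ^ 2))
        = ∑ y, ∑ x, ψ (c * x ^ 2 - c * y ^ 2) := by
          simp_rw [map_sum, sum_mul_sum, ← map_neg_eq_conj, ← AddChar.map_add_eq_mul]
          rw [sum_comm]; simp_rw [sub_eq_add_neg]
      _ = ∑ y, ∑ h, ψ (c * h ^ 2) * ψ (y * (2 * c * h)) := by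
          refine sum_congr rfl fun y _ => ?_
          rw [← Equiv.sum_comp (Equiv.addLeft y)]
          simp_rw [← AddChar.map_add_eq_mul]
          congr! 2 with h
          simp only [Equiv.coe_addLeft]; ring
      _ = _ := by
          rw [sum_comm]; simp_rw [← mul_sum, AddChar.sum_mulShift _ hψ, apply_ite, Nat.cast_zero]
  have hnorm : ‖∑ x, ψ (c * x ^ 2)‖ ^ 2 = ‖∑ h, ψ (c * h ^ 2) *
      if 2 * c * h = 0 then (Fintype.card R : ℂ) else 0‖ := by
    rw [← hdiff, norm_mul, Complex.norm_conj, sq]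
  rw [hnorm]
  refine (norm_sum_le _ _).trans_eq ?_
  simp_rw [norm_mul, AddChar.norm_apply, one_mul, apply_ite, norm_zero, Complex.norm_natCast]
  rw [sum_ite, sum_const_zero, add_zero, sum_const, nsmul_eq_mul, mul_comm]

theorem ZMod.card_natCast_mul_eq_zero_le_gcd (n a : ℕ) [NeZero n] :
    #{h : ZMod n | (a : ZMod n) * h = 0} ≤ a.gcd n := by
  have hgcd : ((a.gcd n : ℕ) : ZMod n) = a * (a.gcdA n : ZMod n) := by
    simpa using congrArg (Int.cast : ℤ → ZMod n) (Nat.gcd_eq_gcd_ab a n)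
  calc #{h : ZMod n | (a : ZMod n) * h = 0} ≤ #{h : ZMod n | a.gcd n • h = 0} := by
        refine card_le_card fun h => ?_
        simp only [mem_filter, mem_univ, true_and, nsmul_eq_mul, hgcd]
        intro ha
        rw [mul_right_comm, ha, zero_mul]
    _ ≤ a.gcd n := IsAddCyclic.card_nsmul_eq_zero_le (Nat.gcd_pos_of_pos_right _ (NeZero.pos n))

theorem ZMod.norm_sum_stdAddChar_mul_sq_le (n a : ℕ) [NeZero n] :
    ‖∑ x : ZMod n, stdAddChar ((a : ZMod n) * x ^ 2)‖ ≤ √(n * (2 * a).gcd n) := by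
  rw [← sqrt_sq (norm_nonneg _)]
  refine sqrt_le_sqrt ((AddChar.norm_sum_mul_sq_sq_le (isPrimitive_stdAddChar n) _).trans ?_)
  rw [ZMod.card]
  gcongr
  have := card_natCast_mul_eq_zero_le_gcd n (2 * a)
  push_cast at this
  exact_mod_cast this

theorem e_natCast_div_s11 (k j : ℕ) [NeZero k] : e (j / k) = ZMod.stdAddChar (j : ZMod k) := by
  rw [← Int.cast_natCast (R := ZMod k), ZMod.stdAddChar_coe, e]
  push_cast
  ring_nf

theorem norm_sum_Icc_e_mul_sq_le {k r d : ℕ} (hk : k ≠ 0) (hkr : k.gcd r = 1) (hd : d ∣ k) :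
    ‖∑ m ∈ Icc 1 (k / d), e (((r * (d * m) ^ 2 : ℕ) : ℝ) / k)‖ ≤ √(2 * k) := by
  obtain ⟨n, rfl⟩ := hd
  have hd0 : d ≠ 0 := left_ne_zero_of_mul hk
  have : NeZero n := ⟨right_ne_zero_of_mul hk⟩
  have hterm : ∀ m : ℕ, e (((r * (d * m) ^ 2 : ℕ) : ℝ) / (d * n : ℕ)) =
      ZMod.stdAddChar (((r * d : ℕ) : ZMod n) * (m : ZMod n) ^ 2) := by
    intro m
    rw [show ((r * (d * m) ^ 2 : ℕ) : ℝ) / (d * n : ℕ) = ((r * d * m ^ 2 : ℕ) : ℝ) / n by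
      push_cast; field_simp, e_natCast_div_s11, Nat.cast_mul, Nat.cast_mul, Nat.cast_pow]
  have hgcd : (2 * (r * d)).gcd n ≤ 2 * d := by
    have hrn : r.Coprime n := (Nat.Coprime.coprime_dvd_left (dvd_mul_left n d) hkr).symm
    rw [show 2 * (r * d) = r * (2 * d) by ring, hrn.gcd_mul_left_cancel]
    exact Nat.gcd_le_left _ (by omega)
  simp_rw [Nat.mul_div_cancel_left n (Nat.pos_of_ne_zero hd0), hterm]
  rw [ZMod.sum_Icc_natCast n fun x => ZMod.stdAddChar (((r * d : ℕ) : ZMod n) * x ^ 2)]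
  refine (ZMod.norm_sum_stdAddChar_mul_sq_le n (r * d)).trans (sqrt_le_sqrt ?_)
  calc (n : ℝ) * (2 * (r * d)).gcd n ≤ n * (2 * d : ℕ) := by gcongr
    _ = 2 * (d * n : ℕ) := by push_cast; ring

theorem add_one_le_rpow_of_two_le_rpow {x ε : ℝ} (hx : 0 ≤ x) (h : 2 ≤ x ^ ε) (a : ℕ) :
    (a + 1 : ℝ) ≤ x ^ (a * ε) :=
  calc (a + 1 : ℝ) ≤ 2 ^ a := by exact_mod_cast (Nat.lt_two_pow_self : a < 2 ^ a)
    _ ≤ (x ^ ε) ^ a := pow_le_pow_left₀ zero_le_two h a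
    _ = x ^ (a * ε) := by rw [← rpow_natCast, ← rpow_mul hx, mul_comm]

theorem add_one_le_mul_rpow {x ε : ℝ} (hx : 2 ≤ x) (hε : 0 < ε) (a : ℕ) :
    (a + 1 : ℝ) ≤ (1 + (ε * log 2)⁻¹) * x ^ (a * ε) := by
  have ht : 0 < ε * log 2 := mul_pos hε (log_pos one_lt_two)
  have hexp : 1 + a * (ε * log 2) ≤ x ^ (a * ε) :=
    calc 1 + a * (ε * log 2) ≤ exp (a * (ε * log 2)) := by
          linarith [add_one_le_exp (a * (ε * log 2))]
      _ = 2 ^ (a * ε) := by rw [rpow_def_of_pos two_pos]; ring_nf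
      _ ≤ x ^ (a * ε) := rpow_le_rpow zero_le_two hx (by positivity)
  calc (a + 1 : ℝ) ≤ (1 + (ε * log 2)⁻¹) * (1 + a * (ε * log 2)) := by
        field_simp
        nlinarith [mul_nonneg (mul_nonneg (Nat.cast_nonneg (α := ℝ) a) ht.le) ht.le]
    _ ≤ (1 + (ε * log 2)⁻¹) * x ^ (a * ε) := by gcongr

theorem Nat.card_divisors_le_prod_mul_rpow {k : ℕ} (hk : k ≠ 0) (ε : ℝ) (g : ℕ → ℝ)
    (hg : ∀ p, p.Prime → ∀ a : ℕ, (a + 1 : ℝ) ≤ g p * p ^ (a * ε)) :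
    (#k.divisors : ℝ) ≤ (∏ p ∈ k.primeFactors, g p) * k ^ ε := by
  have hk_rpow :
      (k : ℝ) ^ ε = ∏ p ∈ k.primeFactors, (p : ℝ) ^ (k.factorization p * ε) := by
    conv_lhs => rw [← Nat.prod_factorization_pow_eq_self hk]
    rw [Nat.prod_factorization_eq_prod_primeFactors, Nat.cast_prod,
      ← Real.finsetProd_rpow _ _ fun p _ => by positivity]
    refine prod_congr rfl fun p _ => ?_
    rw [Nat.cast_pow, ← rpow_natCast, ← rpow_mul (Nat.cast_nonneg p)]
  rw [Nat.card_divisors hk, hk_rpow, ← prod_mul_distrib]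
  push_cast
  exact prod_le_prod (fun _ _ => by positivity)
    fun p hp => hg p (Nat.prime_of_mem_primeFactors hp) _

theorem Nat.exists_card_divisors_le_mul_rpow {ε : ℝ} (hε : 0 < ε) :
    ∃ C : ℝ, ∀ k : ℕ, k ≠ 0 → (#k.divisors : ℝ) ≤ C * k ^ ε := by
  set M : ℝ := 1 + (ε * Real.log 2)⁻¹
  have hM : 1 ≤ M := le_add_of_nonneg_right (by have := Real.log_pos one_lt_two; positivity)
  -- primes `p ≥ N` satisfy `2 ≤ p ^ ε`; only the primes below `N` cost a factor `M`
  set N := ⌈(2 : ℝ) ^ ε⁻¹⌉₊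
  have hg : ∀ p, p.Prime → ∀ a : ℕ,
      (a + 1 : ℝ) ≤ (if p < N then M else 1) * p ^ (a * ε) := by
    intro p hp a
    split_ifs with hpN
    · exact add_one_le_mul_rpow (x := p) (by exact_mod_cast hp.two_le) hε a
    · rw [one_mul]
      refine add_one_le_rpow_of_two_le_rpow (Nat.cast_nonneg p) ?_ a
      calc (2 : ℝ) = ((2 : ℝ) ^ ε⁻¹) ^ ε := by
            rw [← rpow_mul zero_le_two, inv_mul_cancel₀ hε.ne', rpow_one]
        _ ≤ (p : ℝ) ^ ε := by
          gcongr
          exact (Nat.le_ceil _).trans (by exact_mod_cast not_lt.1 hpN)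
  refine ⟨M ^ N, fun k hk => (Nat.card_divisors_le_prod_mul_rpow hk ε _ hg).trans ?_⟩
  gcongr
  rw [prod_ite, prod_const, prod_const_one, mul_one]
  exact pow_le_pow_right₀ hM ((card_le_card fun p hp => mem_range.2 (mem_filter.1 hp).2).trans
    (card_range N).le)

theorem gauss_sum_bound (ε : ℝ) (hε : 0 < ε) :
    ∃ C : ℝ, ∀ k r : ℕ, 0 < k → 0 < r → Nat.gcd k r = 1 →
      ‖G k r‖ ≤ C * (k : ℝ) ^ ((1 : ℝ) / 2 + ε) := by
  obtain ⟨C, hC⟩ := Nat.exists_card_divisors_le_mul_rpow hε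
  refine ⟨C * √2, fun k r hk _ hkr => ?_⟩
  have hG : ‖G k r‖ ≤ #k.divisors * √(2 * k) := by
    rw [G, sum_filter_coprime_eq_sum_divisors_moebius, ← nsmul_eq_mul, ← sum_const]
    refine (norm_sum_le _ _).trans (sum_le_sum fun d hd => ?_)
    rw [zsmul_eq_mul, norm_mul]
    refine (mul_le_of_le_one_left (norm_nonneg _) ?_).trans
      (norm_sum_Icc_e_mul_sq_le hk.ne' hkr (Nat.dvd_of_mem_divisors hd))
    exact_mod_cast ArithmeticFunction.abs_moebius_le_one
  calc ‖G k r‖ ≤ #k.divisors * √(2 * k) := hG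
    _ ≤ C * k ^ ε * √(2 * k) := mul_le_mul_of_nonneg_right (hC k hk.ne') (sqrt_nonneg _)
    _ = C * √2 * k ^ ((1 : ℝ) / 2 + ε) := by
      rw [sqrt_mul zero_le_two, rpow_add (by exact_mod_cast hk), ← sqrt_eq_rpow]; ring
end

section
/- For N ≥ 2, Σ_{1 ≤ k < N} (Σ_{d | k} 1)^2 = O(N (log N)^3). -/
/-!
Writing `(d₁, d₂) ↦ (g, d₁ / g, d₂ / g)` with `g = gcd d₁ d₂` injects pairs of divisors of `k`
into triples `(a, b, c)` with `a * b * c = lcm d₁ d₂ ∣ k`, so `τ(k)² ≤ #{(a, b, c) : a b c ∣ k}`.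
Summing over `k < N` and counting the multiples of `a b c` below `N` gives the bound
`N (∑_{a < N} 1/a)³ ≪ N (log N)³`.
-/

open Finset

theorem Nat.gcd_mul_div_gcd_mul_div_gcd (m n : ℕ) :
    gcd m n * (m / gcd m n) * (n / gcd m n) = lcm m n := by
  rw [Nat.mul_div_cancel' (gcd_dvd_left m n), ← Nat.mul_div_assoc m (gcd_dvd_right m n)]
  rfl

theorem Nat.card_divisors_sq_le_card_triples {k : ℕ} {s : Finset ℕ} (hs : k.divisors ⊆ s) :
    #k.divisors ^ 2 ≤ #{t ∈ s ×ˢ s ×ˢ s | t.1 * t.2.1 * t.2.2 ∣ k} := by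
  rw [sq, ← card_product]
  refine card_le_card_of_injOn (fun d => (gcd d.1 d.2, d.1 / gcd d.1 d.2, d.2 / gcd d.1 d.2))
    (fun d hd => ?_) (fun d _ e _ h => ?_)
  · simp only [coe_product, Set.mem_prod, mem_coe, mem_divisors] at hd
    obtain ⟨⟨hd₁, hk⟩, hd₂, -⟩ := hd
    have mem_s {a : ℕ} (ha : a ∣ k) : a ∈ s := hs (mem_divisors.2 ⟨ha, hk⟩)
    simp only [coe_filter, Set.mem_ofPred_eq, mem_product, gcd_mul_div_gcd_mul_div_gcd]
    exact ⟨⟨mem_s ((gcd_dvd_left _ _).trans hd₁),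
      mem_s ((div_dvd_of_dvd (gcd_dvd_left _ _)).trans hd₁),
      mem_s ((div_dvd_of_dvd (gcd_dvd_right _ _)).trans hd₂)⟩, lcm_dvd hd₁ hd₂⟩
  · simpa only [Nat.mul_div_cancel' (gcd_dvd_left _ _), Nat.mul_div_cancel' (gcd_dvd_right _ _)]
      using congrArg (fun t => (t.1 * t.2.1, t.1 * t.2.2)) h

theorem Nat.card_filter_Ico_dvd_le (N m : ℕ) : (#{k ∈ Ico 1 N | m ∣ k} : ℝ) ≤ N / m := by
  calc (#{k ∈ Ico 1 N | m ∣ k} : ℝ) ≤ #{k ∈ Ioc 0 N | m ∣ k} := by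
        gcongr
        intro k hk
        simp only [mem_Ico, mem_Ioc] at hk ⊢
        omega
    _ ≤ N / m := by
        rw [Nat.Ioc_filter_dvd_card_eq_div]
        exact Nat.cast_div_le

theorem sum_card_filter_dvd_le {ι : Type*} (T : Finset ι) (f : ι → ℕ) (N : ℕ) :
    (∑ k ∈ Ico 1 N, #{t ∈ T | f t ∣ k} : ℝ) ≤ N * ∑ t ∈ T, ((f t : ℝ))⁻¹ := by
  calc (∑ k ∈ Ico 1 N, #{t ∈ T | f t ∣ k} : ℝ) = ∑ t ∈ T, (#{k ∈ Ico 1 N | f t ∣ k} : ℝ) := by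
        exact_mod_cast sum_card_bipartiteAbove_eq_sum_card_bipartiteBelow (fun k t => f t ∣ k)
    _ ≤ ∑ t ∈ T, (N / f t : ℝ) := sum_le_sum fun t _ => Nat.card_filter_Ico_dvd_le N (f t)
    _ = N * ∑ t ∈ T, ((f t : ℝ))⁻¹ := by simp only [mul_sum, div_eq_mul_inv]

theorem sum_inv_triple_product_eq_pow_three (s : Finset ℕ) :
    ∑ t ∈ s ×ˢ s ×ˢ s, (((t.1 * t.2.1 * t.2.2 : ℕ) : ℝ))⁻¹ = (∑ a ∈ s, ((a : ℝ))⁻¹) ^ 3 := by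
  simp only [sum_product, Nat.cast_mul, mul_inv, ← mul_sum, ← sum_mul]
  ring

theorem sum_Ico_inv_le_one_add_log (N : ℕ) : ∑ a ∈ Ico 1 N, ((a : ℝ))⁻¹ ≤ 1 + Real.log N := by
  calc ∑ a ∈ Ico 1 N, ((a : ℝ))⁻¹ ≤ ∑ a ∈ Icc 1 N, ((a : ℝ))⁻¹ :=
        sum_le_sum_of_subset_of_nonneg Ico_subset_Icc_self fun _ _ _ => by positivity
    _ = harmonic N := by simp [harmonic_eq_sum_Icc]
    _ ≤ 1 + Real.log N := harmonic_le_one_add_log N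

theorem divisor_sq_mean_value :
    ∃ C : ℝ, ∀ N : ℕ, 2 ≤ N →
      (∑ k ∈ Finset.Ico 1 N, ((k.divisors.card : ℝ)) ^ 2)
        ≤ C * N * (Real.log N) ^ 3 := by
  refine ⟨27, fun N hN => ?_⟩
  set s := Ico 1 N
  have hdivisors {k : ℕ} (hk : k ∈ s) : k.divisors ⊆ s := fun d hd =>
    mem_Ico.2 ⟨Nat.pos_of_mem_divisors hd, (Nat.divisor_le hd).trans_lt (mem_Ico.1 hk).2⟩
  have hlog : 1 + Real.log N ≤ 3 * Real.log N := by
    have : Real.log 2 ≤ Real.log N := Real.log_le_log two_pos (by exact_mod_cast hN)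
    linarith [Real.log_two_gt_d9]
  calc (∑ k ∈ s, ((k.divisors.card : ℝ)) ^ 2)
      ≤ ∑ k ∈ s, (#{t ∈ s ×ˢ s ×ˢ s | t.1 * t.2.1 * t.2.2 ∣ k} : ℝ) :=
        sum_le_sum fun k hk => by exact_mod_cast Nat.card_divisors_sq_le_card_triples (hdivisors hk)
    _ ≤ N * (∑ a ∈ s, ((a : ℝ))⁻¹) ^ 3 := by
        rw [← sum_inv_triple_product_eq_pow_three]
        exact sum_card_filter_dvd_le (s ×ˢ s ×ˢ s) (fun t => t.1 * t.2.1 * t.2.2) N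
    _ ≤ N * (3 * Real.log N) ^ 3 := by
        gcongr
        exact (sum_Ico_inv_le_one_add_log N).trans hlog
    _ = 27 * N * Real.log N ^ 3 := by ring
end

section
/- For every integer r ≥ 1 and all M, Q ≥ 2, Σ_{k ≤ 2M} (Σ_{q ≤ Q, q | k} 1)^r ≪ M (r log Q)^{2^r} + Q^r, with an absolute implied constant. In particular, Σ_{k ≤ 2M} (Σ_{q ≤ Q, q | k} 1)^r ≪ M (r log Q)^{2^r} when M ≥ Q^r. -/
/-!
Counting `r`-tuples of divisors `q ≤ Q` of `k` and grouping them by their lcm `d`, a divisor of `k`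
with `d ≤ Q ^ r`, bounds the `r`-th moment at `k` by `∑_{d ≤ Q^r, d ∣ k} τ(d)^r`. Summed over
`k ≤ N` this is at most `N ∑_{d ≤ Q^r} τ(d)^r / d`. Since `τ(de) ≤ τ(d) τ(e)`, the sum
`S_r(x) = ∑_{n ≤ x} τ(n)^r / n` satisfies `S_{r+1}(x) ≤ S_r(x)^2`, and `S_0(x) ≤ 1 + log x`, so it is
at most `(1 + r log Q)^(2^r)` at `x = Q^r`. With `t = r log Q`, this is at most `e t^(2^r)` once
`t ≥ 2^r`; for smaller `t` and `r ≥ 4` the trivial bound `N Q^r = N e^t ≤ N t^(2^r)` takes over, and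
for `r ≤ 3` simply `1 + t ≤ 5t/2`.
-/

open Finset
open scoped Pointwise

namespace Nat

theorem card_divisors_mul_le (m n : ℕ) : #(m * n).divisors ≤ #m.divisors * #n.divisors := by
  rw [divisors_mul]
  exact card_mul_le

theorem card_divisorsAntidiagonal (n : ℕ) : #n.divisorsAntidiagonal = #n.divisors := by
  rw [← map_div_right_divisors, card_map]

theorem card_divisors_pow_succ_le (n r : ℕ) :
    #n.divisors ^ (r + 1) ≤
      ∑ p ∈ n.divisorsAntidiagonal, #p.1.divisors ^ r * #p.2.divisors ^ r := by
  calc #n.divisors ^ (r + 1) = ∑ _p ∈ n.divisorsAntidiagonal, #n.divisors ^ r := by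
        rw [sum_const, card_divisorsAntidiagonal, smul_eq_mul, pow_succ, mul_comm]
    _ ≤ _ := by
      refine sum_le_sum fun p hp => ?_
      rw [← mul_pow, ← (mem_divisorsAntidiagonal.mp hp).1]
      exact Nat.pow_le_pow_left (card_divisors_mul_le _ _) r

end Nat

theorem sum_Icc_sum_divisorsAntidiagonal_le_sq {f : ℕ → ℝ} (hf : ∀ n, 0 ≤ f n) (x : ℕ) :
    ∑ n ∈ Icc 1 x, ∑ p ∈ n.divisorsAntidiagonal, f p.1 * f p.2 ≤ (∑ n ∈ Icc 1 x, f n) ^ 2 := by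
  set s := {p ∈ Icc 1 x ×ˢ Icc 1 x | p.1 * p.2 ≤ x}
  have hfiber : ∀ n ∈ Icc 1 x, {p ∈ s | p.1 * p.2 = n} = n.divisorsAntidiagonal := by
    intro n hn
    ext ⟨a, b⟩
    simp only [s, mem_filter, mem_product, mem_Icc, Nat.mem_divisorsAntidiagonal] at hn ⊢
    constructor
    · rintro ⟨-, rfl⟩; omega
    · rintro ⟨rfl, h0⟩
      have ha := Nat.pos_of_ne_zero (left_ne_zero_of_mul h0)
      have hb := Nat.pos_of_ne_zero (right_ne_zero_of_mul h0)
      have := Nat.le_mul_of_pos_right a hb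
      have := Nat.le_mul_of_pos_left b ha
      omega
  have hmaps : ∀ p ∈ s, p.1 * p.2 ∈ Icc 1 x := by
    intro p hp
    simp only [s, mem_filter, mem_product, mem_Icc] at hp
    exact mem_Icc.mpr ⟨Nat.mul_pos hp.1.1.1 hp.1.2.1, hp.2⟩
  calc ∑ n ∈ Icc 1 x, ∑ p ∈ n.divisorsAntidiagonal, f p.1 * f p.2
      = ∑ p ∈ s, f p.1 * f p.2 := by
        rw [← sum_fiberwise_of_maps_to hmaps]
        exact sum_congr rfl fun n hn => by rw [hfiber n hn]
    _ ≤ ∑ p ∈ Icc 1 x ×ˢ Icc 1 x, f p.1 * f p.2 :=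
        sum_le_sum_of_subset_of_nonneg (filter_subset _ _) fun p _ _ => mul_nonneg (hf _) (hf _)
    _ = (∑ n ∈ Icc 1 x, f n) ^ 2 := by rw [sum_product, sq, sum_mul_sum]

theorem sum_Icc_card_divisors_pow_div_le (x r : ℕ) :
    ∑ n ∈ Icc 1 x, (#n.divisors : ℝ) ^ r / n ≤ (1 + Real.log x) ^ 2 ^ r := by
  induction r with
  | zero =>
    simpa [harmonic_eq_sum_Icc] using harmonic_le_one_add_log x
  | succ r ih =>
    set f : ℕ → ℝ := fun n => (#n.divisors : ℝ) ^ r / n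
    have hconv : ∀ n ∈ Icc 1 x, (#n.divisors : ℝ) ^ (r + 1) / n ≤
        ∑ p ∈ n.divisorsAntidiagonal, f p.1 * f p.2 := by
      intro n _
      have hsplit : ∀ p ∈ n.divisorsAntidiagonal,
          f p.1 * f p.2 = (#p.1.divisors : ℝ) ^ r * (#p.2.divisors : ℝ) ^ r / n := by
        intro p hp
        rw [← (Nat.mem_divisorsAntidiagonal.mp hp).1, Nat.cast_mul, mul_div_mul_comm]
      rw [sum_congr rfl hsplit, ← sum_div]
      gcongr
      exact_mod_cast Nat.card_divisors_pow_succ_le n r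
    calc ∑ n ∈ Icc 1 x, (#n.divisors : ℝ) ^ (r + 1) / n
        ≤ ∑ n ∈ Icc 1 x, ∑ p ∈ n.divisorsAntidiagonal, f p.1 * f p.2 := sum_le_sum hconv
      _ ≤ (∑ n ∈ Icc 1 x, f n) ^ 2 :=
          sum_Icc_sum_divisorsAntidiagonal_le_sq (fun n => by positivity) x
      _ ≤ ((1 + Real.log x) ^ 2 ^ r) ^ 2 :=
          pow_le_pow_left₀ (sum_nonneg fun n _ => by positivity) ih 2
      _ = (1 + Real.log x) ^ 2 ^ (r + 1) := by rw [← pow_mul, pow_succ]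

theorem card_filter_dvd_pow_le (Q r : ℕ) {k : ℕ} (hk : k ≠ 0) :
    #{q ∈ Icc 1 Q | q ∣ k} ^ r ≤ ∑ d ∈ Icc 1 (Q ^ r) with d ∣ k, #d.divisors ^ r := by
  set S := {q ∈ Icc 1 Q | q ∣ k}
  have hS : ∀ q ∈ S, (1 ≤ q ∧ q ≤ Q) ∧ q ∣ k := fun q hq => by simpa [S] using hq
  have hlcm : ∀ f ∈ Fintype.piFinset fun _ : Fin r => S,
      univ.lcm f ∈ {d ∈ Icc 1 (Q ^ r) | d ∣ k} := by
    intro f hf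
    rw [Fintype.mem_piFinset] at hf
    have hdvd : univ.lcm f ∣ k := Finset.lcm_dvd fun i _ => (hS _ (hf i)).2
    have hprod : univ.lcm f ∣ ∏ i, f i := Finset.lcm_dvd fun i hi => dvd_prod_of_mem f hi
    have hle : univ.lcm f ≤ Q ^ r :=
      calc univ.lcm f ≤ ∏ i, f i :=
            Nat.le_of_dvd (prod_pos fun i _ => (hS _ (hf i)).1.1) hprod
        _ ≤ ∏ _i : Fin r, Q := prod_le_prod' fun i _ => (hS _ (hf i)).1.2
        _ = Q ^ r := by simp
    simp only [mem_filter, mem_Icc]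
    exact ⟨⟨Nat.pos_of_dvd_of_pos hdvd (Nat.pos_of_ne_zero hk), hle⟩, hdvd⟩
  rw [← Fintype.card_piFinset_const, card_eq_sum_card_fiberwise hlcm]
  refine sum_le_sum fun d hd => ?_
  have hd0 : d ≠ 0 := by simp only [mem_filter, mem_Icc] at hd; omega
  rw [← Fintype.card_piFinset_const]
  refine card_le_card fun f hf => ?_
  rw [mem_filter] at hf
  exact Fintype.mem_piFinset.mpr fun i =>
    Nat.mem_divisors.mpr ⟨hf.2 ▸ Finset.dvd_lcm (mem_univ i), hd0⟩

theorem sum_Icc_sum_filter_dvd_le {w : ℕ → ℝ} (hw : ∀ d, 0 ≤ w d) (N P : ℕ) :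
    ∑ k ∈ Icc 1 N, ∑ d ∈ Icc 1 P with d ∣ k, w d ≤ N * ∑ d ∈ Icc 1 P, w d / d := by
  have hcount : ∀ d, (#{k ∈ Icc 1 N | d ∣ k} : ℝ) ≤ N / d := fun d => by
    rw [← zero_add 1, Finset.Icc_add_one_left_eq_Ioc, Nat.Ioc_filter_dvd_card_eq_div]
    exact Nat.cast_div_le
  calc ∑ k ∈ Icc 1 N, ∑ d ∈ Icc 1 P with d ∣ k, w d
      = ∑ d ∈ Icc 1 P, #{k ∈ Icc 1 N | d ∣ k} * w d := by
        simp_rw [sum_filter]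
        rw [sum_comm]
        simp_rw [← sum_filter, sum_const, nsmul_eq_mul]
    _ ≤ ∑ d ∈ Icc 1 P, N / d * w d := by gcongr with d; exacts [hw d, hcount d]
    _ = N * ∑ d ∈ Icc 1 P, w d / d := by rw [mul_sum]; exact sum_congr rfl fun d _ => by ring

open Real

theorem one_add_pow_le_exp_one_mul_pow {t : ℝ} (ht : 0 < t) {m : ℕ} (hm : m ≤ t) :
    (1 + t) ^ m ≤ exp 1 * t ^ m :=
  calc (1 + t) ^ m = (1 + 1 / t) ^ m * t ^ m := by
        rw [← mul_pow]; congr 1; field_simp; ring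
    _ ≤ exp (1 / t) ^ m * t ^ m := by
        gcongr; linarith [add_one_le_exp (1 / t)]
    _ ≤ exp 1 * t ^ m := by
        rw [← exp_nat_mul]
        gcongr
        rwa [mul_one_div, div_le_one ht]

theorem exp_le_pow_of_exp_one_le {t : ℝ} (ht : exp 1 ≤ t) {m : ℕ} (hm : t ≤ m) :
    exp t ≤ t ^ m :=
  calc exp t ≤ exp m := exp_le_exp.mpr hm
    _ = exp 1 ^ m := by rw [← exp_nat_mul, mul_one]
    _ ≤ t ^ m := by gcongr

theorem min_one_add_pow_exp_le {r : ℕ} (hr : 1 ≤ r) {t : ℝ} (ht : r * log 2 ≤ t) :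
    min ((1 + t) ^ 2 ^ r) (exp t) ≤ (5 / 2) ^ 8 * t ^ 2 ^ r := by
  have hlog2 := log_two_gt_d9
  have he := exp_one_lt_d9
  have hr' : (1 : ℝ) ≤ r := by exact_mod_cast hr
  have ht0 : 0 < t := by nlinarith
  have htpow : (0 : ℝ) ≤ t ^ 2 ^ r := by positivity
  rcases le_or_gt r 3 with hr3 | hr4
  · have hpow : 2 ^ r ≤ 8 := (Nat.pow_le_pow_right two_pos hr3).trans (by norm_num)
    calc min ((1 + t) ^ 2 ^ r) (exp t) ≤ (5 / 2 * t) ^ 2 ^ r :=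
          min_le_of_left_le (pow_le_pow_left₀ (by positivity) (by nlinarith) _)
      _ = (5 / 2) ^ 2 ^ r * t ^ 2 ^ r := mul_pow _ _ _
      _ ≤ (5 / 2) ^ 8 * t ^ 2 ^ r := by gcongr; norm_num
  · have hr4' : (4 : ℝ) ≤ r := by exact_mod_cast hr4
    rcases le_total ((2 ^ r : ℕ) : ℝ) t with hge | hlt
    · calc min ((1 + t) ^ 2 ^ r) (exp t) ≤ exp 1 * t ^ 2 ^ r :=
            min_le_of_left_le (one_add_pow_le_exp_one_mul_pow ht0 hge)
        _ ≤ (5 / 2) ^ 8 * t ^ 2 ^ r := by gcongr; linarith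
    · calc min ((1 + t) ^ 2 ^ r) (exp t) ≤ t ^ 2 ^ r :=
            min_le_of_right_le (exp_le_pow_of_exp_one_le (by nlinarith) hlt)
        _ ≤ (5 / 2) ^ 8 * t ^ 2 ^ r := le_mul_of_one_le_left htpow (by norm_num)

theorem sum_card_filter_dvd_pow_le (N Q r : ℕ) :
    ∑ k ∈ Icc 1 N, (#{q ∈ Icc 1 Q | q ∣ k} : ℝ) ^ r ≤ N * (1 + r * log Q) ^ 2 ^ r :=
  calc ∑ k ∈ Icc 1 N, (#{q ∈ Icc 1 Q | q ∣ k} : ℝ) ^ r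
      ≤ ∑ k ∈ Icc 1 N, ∑ d ∈ Icc 1 (Q ^ r) with d ∣ k, (#d.divisors : ℝ) ^ r :=
        sum_le_sum fun k hk => by
          exact_mod_cast card_filter_dvd_pow_le Q r (by rw [mem_Icc] at hk; omega)
    _ ≤ N * ∑ d ∈ Icc 1 (Q ^ r), (#d.divisors : ℝ) ^ r / d :=
        sum_Icc_sum_filter_dvd_le (fun d => by positivity) N (Q ^ r)
    _ ≤ N * (1 + r * log Q) ^ 2 ^ r := by
        gcongr
        simpa [log_pow] using sum_Icc_card_divisors_pow_div_le (Q ^ r) r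

theorem sum_card_filter_dvd_pow_le_mul_pow (N Q r : ℕ) :
    ∑ k ∈ Icc 1 N, (#{q ∈ Icc 1 Q | q ∣ k} : ℝ) ^ r ≤ N * (Q : ℝ) ^ r :=
  calc ∑ k ∈ Icc 1 N, (#{q ∈ Icc 1 Q | q ∣ k} : ℝ) ^ r ≤ ∑ _k ∈ Icc 1 N, (Q : ℝ) ^ r :=
        sum_le_sum fun k _ => by
          gcongr
          exact_mod_cast (card_filter_le _ _).trans (Nat.card_Icc 1 Q).le
    _ = N * (Q : ℝ) ^ r := by simp

theorem truncated_divisor_moment :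
    ∃ C : ℝ, 0 < C ∧ ∀ r M Q : ℕ, 1 ≤ r → 2 ≤ M → 2 ≤ Q →
      ((∑ k ∈ Finset.Icc 1 (2 * M),
          (((Finset.Icc 1 Q).filter (fun q => q ∣ k)).card : ℝ) ^ r)
        ≤ C * ((M : ℝ) * ((r : ℝ) * Real.log Q) ^ (2 ^ r) + (Q : ℝ) ^ r))
      ∧ (Q ^ r ≤ M →
        (∑ k ∈ Finset.Icc 1 (2 * M),
            (((Finset.Icc 1 Q).filter (fun q => q ∣ k)).card : ℝ) ^ r)
          ≤ C * (M : ℝ) * ((r : ℝ) * Real.log Q) ^ (2 ^ r)) := by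
  refine ⟨2 * (5 / 2) ^ 8, by positivity, fun r M Q hr _ hQ => ?_⟩
  have hQ' : (2 : ℝ) ≤ Q := by exact_mod_cast hQ
  have hQr : (Q : ℝ) ^ r = exp (r * log Q) := by
    rw [← log_pow, exp_log (by positivity)]
  have hmin := min_one_add_pow_exp_le hr (t := r * log Q) (by gcongr)
  rw [← hQr] at hmin
  have hbound : ∑ k ∈ Icc 1 (2 * M), (#{q ∈ Icc 1 Q | q ∣ k} : ℝ) ^ r
      ≤ 2 * (5 / 2) ^ 8 * M * (r * log Q) ^ 2 ^ r :=
    calc _ ≤ (2 * M : ℕ) * min ((1 + r * log Q) ^ 2 ^ r) ((Q : ℝ) ^ r) :=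
          le_min (sum_card_filter_dvd_pow_le _ _ _) (sum_card_filter_dvd_pow_le_mul_pow _ _ _)
            |>.trans_eq (mul_min_of_nonneg _ _ (by positivity)).symm
      _ ≤ (2 * M : ℕ) * ((5 / 2) ^ 8 * (r * log Q) ^ 2 ^ r) := by gcongr
      _ = 2 * (5 / 2) ^ 8 * M * (r * log Q) ^ 2 ^ r := by push_cast; ring
  refine ⟨hbound.trans ?_, fun _ => hbound⟩
  nlinarith [pow_nonneg (Nat.cast_nonneg Q : (0 : ℝ) ≤ Q) r]
end
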